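/- arXiv:1610.01839 — 6 statements merged into one kernel-verified Lean document; each statement's English description precedes it below -/
import Mathlib

section
/- For every digraph D = (V, A) there exists a unique polynomial B_D(q,y,z) in three variables with rational coefficients such that for every positive integer q, B_D(q,y,z) = Σ_{f : V → {1,…,q}} y^{(number of ascents of f)} z^{(number of descents of f)}, where the sum is over all q-colorings f of D. -/
open Finset

/-- The sum over all `q`-colorings `f : V → {1,…,q}` of a digraph (with arc set `A`,
source map `s` and target map `t`) of `y ^ (number of ascents of f) * z ^ (number of
descents of f)`. -/
def colorSum (V A : Type) [Fintype V] [DecidableEq V] [Fintype A]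
    (s t : A → V) (q : ℕ) (y z : ℚ) : ℚ :=
  ∑ f : V → Fin q,
    y ^ (Finset.univ.filter (fun a => f (s a) < f (t a))).card *
    z ^ (Finset.univ.filter (fun a => f (t a) < f (s a))).card

/-!
Group the `q`-colorings by their image `T ⊆ [q]`. Composing with the order isomorphism
`[#T] ≃o T` preserves ascents and descents, so the colorings with an image of size `k`
contribute `(q choose k)` times the weighted sum `S_k(y,z)` over the surjective colorings
`V → [k]`, and `S_k = 0` for `k > |V|`. Hence the color sum is
`∑_{k ≤ |V|} (q choose k) S_k(y,z)`, a polynomial in `(q,y,z)`. It is unique because a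
polynomial vanishing on `ℤ_{>0} × ℚ × ℚ` is zero.
-/

section ColorWeight

variable {V A R : Type*} [Fintype A] (s t : A → V)

def colorWeight [CommMonoid R] {α : Type*} [LinearOrder α] (y z : R) (f : V → α) : R :=
  y ^ #{a | f (s a) < f (t a)} * z ^ #{a | f (t a) < f (s a)}

theorem colorWeight_comp_strictMono [CommMonoid R] {α β : Type*} [LinearOrder α]
    [LinearOrder β] {e : α → β} (he : StrictMono e) (y z : R) (f : V → α) :
    colorWeight s t y z (e ∘ f) = colorWeight s t y z f := by
  simp only [colorWeight, Function.comp_apply, he.lt_iff_lt]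

theorem map_colorWeight {S F : Type*} [CommMonoid R] [CommMonoid S] [FunLike F R S]
    [MonoidHomClass F R S] (φ : F) {α : Type*} [LinearOrder α] (y z : R) (f : V → α) :
    φ (colorWeight s t y z f) = colorWeight s t (φ y) (φ z) f := by
  simp only [colorWeight, map_mul, map_pow]

variable [Fintype V] [DecidableEq V]

def surjColorSum [CommSemiring R] (k : ℕ) (y z : R) : R :=
  ∑ g : V → Fin k with g.Surjective, colorWeight s t y z g

theorem map_surjColorSum {S F : Type*} [CommSemiring R] [CommSemiring S] [FunLike F R S]
    [RingHomClass F R S] (φ : F) (k : ℕ) (y z : R) :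
    φ (surjColorSum s t k y z) = surjColorSum s t k (φ y) (φ z) := by
  simp only [surjColorSum, map_sum, map_colorWeight]

theorem surjColorSum_eq_zero_of_card_lt [CommSemiring R] {k : ℕ} (hk : Fintype.card V < k)
    (y z : R) : surjColorSum s t k y z = 0 :=
  sum_eq_zero fun g hg => absurd (Fintype.card_le_of_surjective g (mem_filter.1 hg).2)
    (by simpa using hk)

theorem sum_colorWeight_image_eq [CommSemiring R] {α : Type*} [Fintype α] [LinearOrder α]
    (y z : R) (T : Finset α) :
    ∑ f : V → α with univ.image f = T, colorWeight s t y z f = surjColorSum s t #T y z := by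
  set e := T.orderEmbOfFin rfl
  symm
  refine sum_nbij (e ∘ ·) (fun g hg => ?_) e.injective.comp_left.injOn (fun f hf => ?_)
    (fun g _ => (colorWeight_comp_strictMono s t e.strictMono y z g).symm)
  · rw [mem_filter, image_comp, image_univ_of_surjective (mem_filter.1 hg).2,
      image_orderEmbOfFin_univ]
    exact ⟨mem_univ _, rfl⟩
  · have hrange : Set.range f = Set.range e := by
      rw [range_orderEmbOfFin, ← (mem_filter.1 hf).2, coe_image, coe_univ, Set.image_univ]
    obtain ⟨g, rfl⟩ := Set.range_subset_range_iff_exists_comp.1 hrange.le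
    have hg : g.Surjective := by
      rw [← Set.range_eq_univ, ← (Set.image_injective.2 e.injective).eq_iff, ← Set.range_comp,
        Set.image_univ]
      exact hrange
    exact ⟨g, by simpa using hg, rfl⟩

theorem sum_colorWeight_eq_sum_choose_mul_surjColorSum [CommSemiring R] (α : Type*)
    [Fintype α] [LinearOrder α] (y z : R) :
    ∑ f : V → α, colorWeight s t y z f =
      ∑ k ∈ range (Fintype.card V + 1), (Fintype.card α).choose k * surjColorSum s t k y z := by
  set u := fun k => (Fintype.card α).choose k * surjColorSum s t k y z
  calc ∑ f : V → α, colorWeight s t y z f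
      = ∑ T ∈ (univ : Finset α).powerset, surjColorSum s t #T y z := by
        rw [powerset_univ, ← sum_fiberwise univ (univ.image ·)]
        exact sum_congr rfl fun T _ => sum_colorWeight_image_eq s t y z T
    _ = ∑ k ∈ range (Fintype.card α + 1), u k := by
        rw [sum_powerset_apply_card (surjColorSum s t · y z), card_univ]
        simp only [nsmul_eq_mul, u]
    _ = ∑ k ∈ range (Fintype.card α + Fintype.card V + 1), u k :=
        (eventually_constant_sum (fun k hk => by simp [u, Nat.choose_eq_zero_of_lt hk])
          (by omega)).symm
    _ = ∑ k ∈ range (Fintype.card V + 1), u k :=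
        eventually_constant_sum (fun k hk => by
          simp [u, surjColorSum_eq_zero_of_card_lt s t (Nat.lt_of_succ_le hk)]) (by omega)

end ColorWeight

section ColorPoly

open MvPolynomial

variable {V A : Type*} [Fintype A] (s t : A → V) [Fintype V] [DecidableEq V]
  (K : Type*) [Field K] [CharZero K]

noncomputable def colorPoly : MvPolynomial (Fin 3) K :=
  ∑ k ∈ range (Fintype.card V + 1), Ring.choose (X 0) k * surjColorSum s t k (X 1) (X 2)

theorem eval_colorPoly (q : ℕ) (y z : K) :
    eval ![(q : K), y, z] (colorPoly s t K) = ∑ f : V → Fin q, colorWeight s t y z f := by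
  rw [sum_colorWeight_eq_sum_choose_mul_surjColorSum, Fintype.card_fin, colorPoly, map_sum]
  simp [Ring.map_choose, map_surjColorSum, Ring.choose_natCast]

end ColorPoly

theorem MvPolynomial.eq_of_eval_natCast_eq {R : Type*} [CommRing R] [IsDomain R] [CharZero R]
    {p q : MvPolynomial (Fin 3) R}
    (h : ∀ n : ℕ, 0 < n → ∀ y z : R, eval ![(n : R), y, z] p = eval ![(n : R), y, z] q) :
    p = q := by
  refine funext_set ![Set.range (fun n : ℕ => ((n + 1 : ℕ) : R)), Set.univ, Set.univ]
    (fun i => ?_) (fun x hx => ?_)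
  · fin_cases i
    · exact Set.infinite_range_of_injective (Nat.cast_injective.comp Nat.succ_injective)
    all_goals exact Set.infinite_univ
  · obtain ⟨n, hn⟩ := hx 0 trivial
    have hx : x = ![((n + 1 : ℕ) : R), x 1, x 2] := by
      ext i
      fin_cases i <;> simp [← hn]
    rw [hx]
    exact h _ n.succ_pos _ _

theorem colorSum_eq_sum_colorWeight (V A : Type) [Fintype V] [DecidableEq V] [Fintype A]
    (s t : A → V) (q : ℕ) (y z : ℚ) :
    colorSum V A s t q y z = ∑ f : V → Fin q, colorWeight s t y z f :=
  rfl

/-- for every digraph `D = (V,A)` there exists a unique trivariate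
polynomial `B_D(q,y,z)` with rational coefficients such that for every positive integer
`q`, `B_D(q,y,z) = Σ_{f : V → [q]} y^{#ascents of f} z^{#descents of f}`. -/
theorem existsUnique_B_polynomial (V A : Type) [Fintype V] [DecidableEq V] [Fintype A]
    (s t : A → V) :
    ∃! B : MvPolynomial (Fin 3) ℚ, ∀ q : ℕ, 0 < q → ∀ y z : ℚ,
      MvPolynomial.eval ![(q : ℚ), y, z] B = colorSum V A s t q y z := by
  have hcolorPoly : ∀ q : ℕ, 0 < q → ∀ y z : ℚ,
      MvPolynomial.eval ![(q : ℚ), y, z] (colorPoly s t ℚ) = colorSum V A s t q y z :=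
    fun q _ y z => by rw [eval_colorPoly, colorSum_eq_sum_colorWeight]
  refine ⟨colorPoly s t ℚ, hcolorPoly, fun B hB => ?_⟩
  exact MvPolynomial.eq_of_eval_natCast_eq fun q hq y z => by rw [hB q hq, hcolorPoly q hq]
end

section
/- Let D = (V,A) be a digraph and let a ∈ A be an arc. Then B_D(q,y,z) + B_{D^{−a}}(q,y,z) = (y+z) · B_{D∖a}(q,y,z) + (2 − y − z) · B_{D/a}(q,y,z), where D^{−a} is obtained from D by swapping the source and target of a, D∖a is obtained by deleting a, and D/a is obtained by deleting a and identifying the vertices s(a) and t(a). Equivalently, for every positive integer q the corresponding identity holds between the coloring sums defining these B-polynomials. -/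
/-!
Write the weight `y ^ #ascents * z ^ #descents` of a colouring `f` as a product over the arcs.
The arc `a` of `D` and its reversal in `D^{-a}` contribute `y` and `z` (in some order) when
`f (s a) ≠ f (t a)`, and `1` each otherwise, so together they contribute
`(y + z) + (2 - y - z) [f (s a) = f (t a)]` times the weight of `f` on `D ∖ a`. The colourings with
`f (s a) = f (t a)` are exactly the pullbacks along `π` of the colourings of `D / a`. This proves the
identity at every positive integer `q`; a polynomial in `q` vanishing at infinitely many points
is zero.
-/

open Finset

namespace MvPolynomial

theorem eval_cons_eq_zero_of_forall_natCast {R : Type*} [CommRing R] [IsDomain R] [CharZero R]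
    {n : ℕ} (P : MvPolynomial (Fin (n + 1)) R) (v : Fin n → R)
    (h : ∀ m : ℕ, 0 < m → eval (Fin.cons (m : R) v) P = 0) (x : R) :
    eval (Fin.cons x v) P = 0 := by
  set p := Polynomial.map (eval v) (finSuccEquiv R n P)
  have hroots : Set.range (fun m : ℕ => ((m + 1 : ℕ) : R)) ⊆ {r | p.IsRoot r} := by
    rintro _ ⟨m, rfl⟩
    simpa [p, eval_eq_eval_mv_eval'] using h (m + 1) m.succ_pos
  have hp : p = 0 := Polynomial.eq_zero_of_infinite_isRoot p <|
    (Set.infinite_range_of_injective fun _ _ hm => by simpa using hm).mono hroots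
  simpa [p, eval_eq_eval_mv_eval'] using congrArg (Polynomial.eval x) hp

end MvPolynomial

section Coloring

variable {C : Type*} [LinearOrder C]

def arcWeight {R : Type*} [Monoid R] (y z : R) (i j : C) : R :=
  y ^ (if i < j then 1 else 0) * z ^ (if j < i then 1 else 0)

theorem arcWeight_add_arcWeight_swap {R : Type*} [CommRing R] (y z : R) (i j : C) :
    arcWeight y z i j + arcWeight y z j i = y + z + (2 - y - z) * if i = j then 1 else 0 := by
  rcases lt_trichotomy i j with h | rfl | h
  · simp [arcWeight, h, h.not_gt, h.ne]
  · norm_num [arcWeight]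
  · simp [arcWeight, h, h.not_gt, h.ne', add_comm]

theorem pow_card_ascents_mul_pow_card_descents_eq_prod {R V A : Type*} [CommMonoid R] [Fintype A]
    (s t : A → V) (f : V → C) (y z : R) :
    y ^ (Finset.univ.filter fun a => f (s a) < f (t a)).card *
        z ^ (Finset.univ.filter fun a => f (t a) < f (s a)).card =
      ∏ a, arcWeight y z (f (s a)) (f (t a)) := by
  simp only [arcWeight, Finset.prod_mul_distrib, Finset.prod_pow_eq_pow_sum, Finset.card_filter]

end Coloring

theorem sum_comp_eq_sum_filter_eq {V V' C M : Type*} [Fintype V] [DecidableEq V] [Fintype V']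
    [DecidableEq V'] [Fintype C] [DecidableEq C] [AddCommMonoid M] {π : V → V'} {u v : V}
    (hπsurj : Function.Surjective π)
    (hπ : ∀ x y : V, π x = π y ↔ x = y ∨ (x = u ∨ x = v) ∧ (y = u ∨ y = v))
    (F : (V → C) → M) :
    ∑ g : V' → C, F (g ∘ π) = ∑ f : V → C with f u = f v, F f := by
  have hsection : ∀ f : V → C, f u = f v → (f ∘ Function.surjInv hπsurj) ∘ π = f := by
    intro f hf
    funext x
    rcases (hπ _ _).1 (Function.surjInv_eq hπsurj (π x)) with hx | ⟨hx | hx, rfl | rfl⟩ <;>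
      simp [hx, hf]
  refine Finset.sum_nbij' (· ∘ π) (· ∘ Function.surjInv hπsurj) ?_ ?_ ?_ ?_ ?_
  · intro g _
    simpa using congrArg g ((hπ u v).2 (Or.inr ⟨Or.inl rfl, Or.inr rfl⟩))
  · simp
  · intro g _
    funext x
    simp [Function.surjInv_eq hπsurj]
  · intro f hf
    exact hsection f (by simpa using hf)
  · intro g _
    rfl

theorem colorSum_add_colorSum_reverse {V A : Type} [Fintype V] [DecidableEq V]
    [Fintype A] [DecidableEq A] (s t : A → V) (a : A)
    {V' : Type} [Fintype V'] [DecidableEq V'] {π : V → V'}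
    (hπsurj : Function.Surjective π)
    (hπ : ∀ x y : V, π x = π y ↔
      (x = y ∨ ((x = s a ∨ x = t a) ∧ (y = s a ∨ y = t a))))
    (q : ℕ) (y z : ℚ) :
    colorSum V A s t q y z +
        colorSum V A (Function.update s a (t a)) (Function.update t a (s a)) q y z =
      (y + z) * colorSum V {b : A // b ≠ a} (fun b => s b.1) (fun b => t b.1) q y z +
        (2 - y - z) * colorSum V' {b : A // b ≠ a}
          (fun b => π (s b.1)) (fun b => π (t b.1)) q y z := by
  have hsplit : ∀ f : V → Fin q,
      ∏ b, arcWeight y z (f (s b)) (f (t b)) +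
          ∏ b, arcWeight y z (f (Function.update s a (t a) b)) (f (Function.update t a (s a) b)) =
        (y + z) * ∏ b : {b : A // b ≠ a}, arcWeight y z (f (s b.1)) (f (t b.1)) +
          (2 - y - z) * if f (s a) = f (t a) then
            ∏ b : {b : A // b ≠ a}, arcWeight y z (f (s b.1)) (f (t b.1)) else 0 := by
    intro f
    have hrest : ∏ b : {b : A // b ≠ a},
        arcWeight y z (f (Function.update s a (t a) b)) (f (Function.update t a (s a) b)) =
          ∏ b : {b : A // b ≠ a}, arcWeight y z (f (s b.1)) (f (t b.1)) :=
      Finset.prod_congr rfl fun b _ => by rw [Function.update_of_ne b.2, Function.update_of_ne b.2]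
    rw [Fintype.prod_eq_mul_prod_subtype_ne _ a, Fintype.prod_eq_mul_prod_subtype_ne _ a, hrest,
      Function.update_self, Function.update_self, ← add_mul, arcWeight_add_arcWeight_swap]
    split_ifs <;> ring
  simp only [colorSum, pow_card_ascents_mul_pow_card_descents_eq_prod]
  rw [← Finset.sum_add_distrib, Finset.sum_congr rfl fun f _ => hsplit f, Finset.sum_add_distrib,
    ← Finset.mul_sum, ← Finset.mul_sum, ← Finset.sum_filter, ← sum_comp_eq_sum_filter_eq hπsurj hπ]
  rfl

/-- for any digraph `D = (V,A)` and any arc `a ∈ A`,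
`B_D(q,y,z) + B_{D^{−a}}(q,y,z) = (y+z) · B_{D∖a}(q,y,z) + (2−y−z) · B_{D/a}(q,y,z)`.
Here `D^{−a}` swaps the source and target of `a`, `D∖a` has arc set `{b : A // b ≠ a}`,
and `D/a` is realized by any vertex set `V'` with a surjection `π : V → V'` identifying
exactly `s a` and `t a` (its arcs are those of `D∖a`, with endpoints pushed forward by
`π`). -/
theorem B_arc_relation (V A : Type) [Fintype V] [DecidableEq V]
    [Fintype A] [DecidableEq A]
    (s t : A → V) (a : A)
    (V' : Type) [Fintype V'] [DecidableEq V'] (π : V → V')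
    (hπsurj : Function.Surjective π)
    (hπ : ∀ x y : V, π x = π y ↔
      (x = y ∨ ((x = s a ∨ x = t a) ∧ (y = s a ∨ y = t a))))
    (B Brev Bdel Bcon : MvPolynomial (Fin 3) ℚ)
    (hB : ∀ q : ℕ, 0 < q → ∀ y z : ℚ,
      MvPolynomial.eval ![(q : ℚ), y, z] B = colorSum V A s t q y z)
    (hBrev : ∀ q : ℕ, 0 < q → ∀ y z : ℚ,
      MvPolynomial.eval ![(q : ℚ), y, z] Brev =
        colorSum V A (Function.update s a (t a)) (Function.update t a (s a)) q y z)
    (hBdel : ∀ q : ℕ, 0 < q → ∀ y z : ℚ,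
      MvPolynomial.eval ![(q : ℚ), y, z] Bdel =
        colorSum V {b : A // b ≠ a} (fun b => s b.1) (fun b => t b.1) q y z)
    (hBcon : ∀ q : ℕ, 0 < q → ∀ y z : ℚ,
      MvPolynomial.eval ![(q : ℚ), y, z] Bcon =
        colorSum V' {b : A // b ≠ a}
          (fun b => π (s b.1)) (fun b => π (t b.1)) q y z) :
    ∀ q y z : ℚ,
      MvPolynomial.eval ![q, y, z] B + MvPolynomial.eval ![q, y, z] Brev =
        (y + z) * MvPolynomial.eval ![q, y, z] Bdel +
        (2 - y - z) * MvPolynomial.eval ![q, y, z] Bcon := by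
  intro q y z
  open MvPolynomial in
  set P : MvPolynomial (Fin 3) ℚ := B + Brev - ((X 1 + X 2) * Bdel + (2 - X 1 - X 2) * Bcon)
  have hP : ∀ x : ℚ, eval (Fin.cons x ![y, z]) P =
      eval ![x, y, z] B + eval ![x, y, z] Brev -
        ((y + z) * eval ![x, y, z] Bdel + (2 - y - z) * eval ![x, y, z] Bcon) := by
    intro x
    simp [P]
  have hvanish := eval_cons_eq_zero_of_forall_natCast P ![y, z] (fun m hm => by
    rw [hP, hB m hm, hBrev m hm, hBdel m hm, hBcon m hm,
      colorSum_add_colorSum_reverse s t a hπsurj hπ, sub_self]) q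
  rw [hP, sub_eq_zero] at hvanish
  exact hvanish
end

section
/- Let D = (V,A) be a digraph. Then for every positive integer q, Σ_{A = R ⊎ S ⊎ T} y^{|S|} z^{|T|} · N^<_{R,S,T}(q) = B_D(q, 1+y, 1+z), where the sum is over all ordered partitions of A into three disjoint (possibly empty) sets R, S, T, and N^<_{R,S,T}(q) is the number of q-colorings f : V → {1,…,q} such that f(s(a)) < f(t(a)) for every a ∈ S and f(t(a)) < f(s(a)) for every a ∈ T (i.e., N^<_{R,S,T}(q) is the number of q-colorings of the digraph obtained from D by deleting the arcs in R and reversing the arcs in T having only strict ascents). -/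
open Finset

/-- for a digraph `D = (V,A)`, for every positive integer `q`,
`Σ_{A = R ⊎ S ⊎ T} y^{|S|} z^{|T|} · N^<_{R,S,T}(q) = B_D(q, 1+y, 1+z)`.
Ordered partitions `A = R ⊎ S ⊎ T` are encoded by maps `g : A → Fin 3`
(`R = g⁻¹(0)`, `S = g⁻¹(1)`, `T = g⁻¹(2)`), and `N^<_{R,S,T}(q)` is the number of
`q`-colorings `f` with `f(s a) < f(t a)` for `a ∈ S` and `f(t a) < f(s a)` for
`a ∈ T`. -/
theorem B_strict_chromatic_deletion_reorientation_expansion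
    (V A : Type) [Fintype V] [DecidableEq V] [Fintype A] [DecidableEq A]
    (s t : A → V)
    (B : MvPolynomial (Fin 3) ℚ)
    (hB : ∀ q : ℕ, 0 < q → ∀ y z : ℚ,
      MvPolynomial.eval ![(q : ℚ), y, z] B = colorSum V A s t q y z) :
    ∀ q : ℕ, 0 < q → ∀ y z : ℚ,
      ∑ g : A → Fin 3,
        y ^ (Finset.univ.filter (fun a => g a = 1)).card *
        z ^ (Finset.univ.filter (fun a => g a = 2)).card *
        (Nat.card {f : V → Fin q //
          ∀ a : A, (g a = 1 → f (s a) < f (t a)) ∧ (g a = 2 → f (t a) < f (s a))} : ℚ)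
      = MvPolynomial.eval ![(q : ℚ), 1 + y, 1 + z] B := by
  intro q hq y z
  rw [hB q hq]
  unfold colorSum
  -- rewrite the Nat.card as a sum of indicators
  have hcard : ∀ g : A → Fin 3,
      (Nat.card {f : V → Fin q //
        ∀ a : A, (g a = 1 → f (s a) < f (t a)) ∧ (g a = 2 → f (t a) < f (s a))} : ℚ)
      = ∑ f : V → Fin q,
          if (∀ a : A, (g a = 1 → f (s a) < f (t a)) ∧ (g a = 2 → f (t a) < f (s a)))
          then (1 : ℚ) else 0 := by
    intro g
    rw [Nat.card_eq_fintype_card, Fintype.card_subtype, Finset.card_filter]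
    push_cast
    simp
  calc
    ∑ g : A → Fin 3,
        y ^ (Finset.univ.filter (fun a => g a = 1)).card *
        z ^ (Finset.univ.filter (fun a => g a = 2)).card *
        (Nat.card {f : V → Fin q //
          ∀ a : A, (g a = 1 → f (s a) < f (t a)) ∧ (g a = 2 → f (t a) < f (s a))} : ℚ)
      = ∑ f : V → Fin q, ∑ g : A → Fin 3, ∏ a : A,
          (if g a = 1 then (if f (s a) < f (t a) then y else 0) else
            if g a = 2 then (if f (t a) < f (s a) then z else 0) else 1) := by
        rw [Finset.sum_comm]
        refine Finset.sum_congr rfl fun g _ => ?_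
        rw [hcard g, Finset.mul_sum]
        refine Finset.sum_congr rfl fun f _ => ?_
        rw [← Fintype.prod_boole, ← Finset.prod_const (b := y), Finset.prod_filter,
          ← Finset.prod_const (b := z), Finset.prod_filter,
          ← Finset.prod_mul_distrib, ← Finset.prod_mul_distrib]
        refine Finset.prod_congr rfl fun a _ => ?_
        by_cases h1 : g a = 1 <;> by_cases h2 : g a = 2 <;>
          simp [h1, h2] <;> tauto
    _ = ∑ f : V → Fin q, ∏ a : A,
          ((1 : ℚ) + (if f (s a) < f (t a) then y else 0)
            + (if f (t a) < f (s a) then z else 0)) := by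
        refine Finset.sum_congr rfl fun f _ => ?_
        have := Fintype.prod_sum (f := fun (a : A) (j : Fin 3) =>
          if j = 1 then (if f (s a) < f (t a) then y else 0) else
            if j = 2 then (if f (t a) < f (s a) then z else 0) else 1)
        rw [← this]
        refine Finset.prod_congr rfl fun a _ => ?_
        rw [Fin.sum_univ_three]
        norm_num [show (0:Fin 3) ≠ 2 by decide, show (2:Fin 3) ≠ 1 by decide]
    _ = ∑ f : V → Fin q,
          (1 + y) ^ (Finset.univ.filter (fun a => f (s a) < f (t a))).card *
          (1 + z) ^ (Finset.univ.filter (fun a => f (t a) < f (s a))).card := by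
        refine Finset.sum_congr rfl fun f _ => ?_
        rw [← Finset.prod_const (b := 1 + y), Finset.prod_filter,
          ← Finset.prod_const (b := 1 + z), Finset.prod_filter,
          ← Finset.prod_mul_distrib]
        refine Finset.prod_congr rfl fun a _ => ?_
        by_cases h1 : f (s a) < f (t a) <;> by_cases h2 : f (t a) < f (s a) <;>
          simp [h1, h2] <;> first | (exact absurd h2 (asymm h1)) | ring
end

section
/- Let D = (V,A) be a digraph. For every positive integer q, χ^≥_D(−q) = (−1)^{c} · N(q), where χ^≥_D is the weak-chromatic polynomial of D evaluated at −q, c is the number of strongly connected components of D, and N(q) is the number of q-colorings f : V → {1,…,q} that are constant on each strongly connected component of D and satisfy f(s(a)) < f(t(a)) for every arc a ∈ A that does not lie on a directed cycle (i.e., N(q) is the number of q-colorings with only strict ascents of the acyclic digraph acyc(D) obtained from D by contracting all cyclic arcs). -/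
/-- The arc `a` lies on some directed cycle of the digraph. -/
def IsCyclicArc {V A : Type} (s t : A → V) (a : A) : Prop :=
  ∃ n : ℕ, 0 < n ∧ ∃ c : ZMod n → A,
    (∀ i, t (c i) = s (c (i + 1))) ∧ ∃ i, c i = a

/-- The setoid on vertices whose classes are the strongly connected components of the
digraph: `u ∼ v` iff each is reachable from the other by a directed path. -/
def sccSetoid {V A : Type} (s t : A → V) : Setoid V where
  r u v := Relation.ReflTransGen (fun x y => ∃ a, s a = x ∧ t a = y) u v ∧
           Relation.ReflTransGen (fun x y => ∃ a, s a = x ∧ t a = y) v u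
  iseqv := ⟨fun _ => ⟨Relation.ReflTransGen.refl, Relation.ReflTransGen.refl⟩,
    fun h => ⟨h.2, h.1⟩, fun h h' => ⟨h.1.trans h'.1, h'.2.trans h.2⟩⟩

/-!
A coloring `f` with `f (s a) ≤ f (t a)` for every arc is a monotone map from the reachability
preorder `P` of `D` to the chain `Fin q`, and the colorings counted by `N(q)` are those that are
moreover strictly increasing from a strong component to a strictly higher one. So the theorem is
Stanley's reciprocity `Ω(P, -q) = (-1)^c Ω°(P, q)` for the finite preorder `P`, whose
antisymmetrization has the `c` strong components as elements.

It is proved by induction on the number of incomparable pairs. For incomparable `u`, `v`,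
splitting colorings by `f u < f v`, `f u = f v`, `f v < f u` gives
`Ω(P) = Ω(P + u ≤ v) + Ω(P + v ≤ u) - Ω(P / u = v)` and
`Ω°(P) = Ω°(P + u ≤ v) + Ω°(P + v ≤ u) + Ω°(P / u = v)`, where only `P / u = v` loses a class,
which produces the sign. When `P` is total with `c` classes, `Ω(P, q) = C(q + c - 1, c)` and
`Ω°(P, q) = C(q, c)` are the values of `X (X + 1) ⋯ (X + c - 1) / c!` at `q` and, up to `(-1)^c`,
at `-q`.
-/

open Polynomial Relation Function Nat

namespace OrderPolynomial

variable {V β : Type*}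

section Counting

variable {F : Type*}

theorem card_add_card_eq_card_le_add_card_ge [Finite F] [LinearOrder β] (P : F → Prop)
    (g h : F → β) :
    Nat.card {x // P x} + Nat.card {x // P x ∧ g x = h x} =
      Nat.card {x // P x ∧ g x ≤ h x} + Nat.card {x // P x ∧ h x ≤ g x} := by
  classical
  have := Fintype.ofFinite F
  simp only [Nat.card_eq_fintype_card, Fintype.card_subtype, Finset.card_filter,
    ← Finset.sum_add_distrib]
  refine Finset.sum_congr rfl fun x _ => ?_
  by_cases hP : P x
  · simp only [hP, true_and]
    split_ifs <;> first | rfl | (exfalso; order)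
  · simp [hP]

theorem card_eq_card_lt_add_card_gt_add_card_eq [Finite F] [LinearOrder β] (P : F → Prop)
    (g h : F → β) :
    Nat.card {x // P x} = Nat.card {x // P x ∧ g x < h x} + Nat.card {x // P x ∧ h x < g x} +
      Nat.card {x // P x ∧ g x = h x} := by
  classical
  have := Fintype.ofFinite F
  simp only [Nat.card_eq_fintype_card, Fintype.card_subtype, Finset.card_filter,
    ← Finset.sum_add_distrib]
  refine Finset.sum_congr rfl fun x _ => ?_
  by_cases hP : P x
  · simp only [hP, true_and]
    split_ifs <;> first | rfl | (exfalso; order)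
  · simp [hP]

theorem card_strictMono_fin (c q : ℕ) :
    Nat.card {f : Fin c → Fin q // StrictMono f} = q.choose c := by
  classical
  let e : {f : Fin c → Fin q // StrictMono f} ≃ {s : Finset (Fin q) // s.card = c} :=
    { toFun f := ⟨Finset.univ.image f.1, by
        rw [Finset.card_image_of_injective _ f.2.injective, Finset.card_univ, Fintype.card_fin]⟩
      invFun s := ⟨s.1.orderEmbOfFin s.2, (s.1.orderEmbOfFin s.2).strictMono⟩
      left_inv f := Subtype.ext (Finset.orderEmbOfFin_unique _
          (fun x => Finset.mem_image_of_mem f.1 (Finset.mem_univ x)) f.2).symm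
      right_inv s := Subtype.ext <| Finset.coe_injective <| by
        simp only [Finset.coe_image, Finset.coe_univ, Set.image_univ, Finset.range_orderEmbOfFin] }
  rw [Nat.card_congr e, Nat.card_eq_fintype_card, Fintype.card_finset_len, Fintype.card_fin]

theorem val_add_le_val_add_of_strictMono {c N : ℕ} {g : Fin c → Fin N} (hg : StrictMono g)
    {i j : Fin c} (hij : i ≤ j) : (g i : ℕ) + j ≤ g j + i := by
  obtain ⟨j, hj⟩ := j
  induction j with
  | zero => simp [show i = ⟨0, hj⟩ from Fin.ext (Nat.le_zero.1 hij)]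
  | succ j ih =>
    rcases eq_or_lt_of_le hij with rfl | hlt
    · simp
    have hstep : g ⟨j, by omega⟩ < g ⟨j + 1, hj⟩ := hg (Fin.mk_lt_mk.2 j.lt_succ_self)
    have := ih (by omega) (Fin.le_def.2 (by rw [Fin.lt_def] at hlt; simp at hlt ⊢; omega))
    rw [Fin.lt_def] at hstep
    simp only at this ⊢
    omega

/-- Stars and bars: `f ↦ (i ↦ f i + i)` turns weakly increasing sequences into strictly
increasing ones. -/
theorem card_monotone_fin (c q : ℕ) :
    Nat.card {f : Fin c → Fin q // Monotone f} = (q + c - 1).choose c := by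
  rw [← card_strictMono_fin]
  refine Nat.card_congr
    { toFun f := ⟨fun i => ⟨f.1 i + i, by have := (f.1 i).isLt; omega⟩, fun i j hij => by
        have := f.2 hij.le
        simp only [Fin.lt_def, Fin.le_def] at hij this ⊢
        omega⟩
      invFun g := ⟨fun i => ⟨g.1 i - i, by
          have hi := i.isLt
          have hle := val_add_le_val_add_of_strictMono g.2 (Fin.le_def.2 (by simp; omega) :
            i ≤ ⟨c - 1, by omega⟩)
          have hfirst := val_add_le_val_add_of_strictMono g.2 (Fin.le_def.2 (Nat.zero_le _) :
            (⟨0, by omega⟩ : Fin c) ≤ i)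
          have := (g.1 ⟨c - 1, by omega⟩).isLt
          simp only at hle hfirst
          omega⟩, fun i j hij => by
        have := val_add_le_val_add_of_strictMono g.2 hij
        rw [Fin.le_def] at hij ⊢
        dsimp only
        omega⟩
      left_inv f := by ext; simp
      right_inv g := by
        ext i
        have := val_add_le_val_add_of_strictMono g.2 (Fin.le_def.2 (Nat.zero_le _) :
          (⟨0, by have := i.isLt; omega⟩ : Fin c) ≤ i)
        simp only at this ⊢
        omega }

end Counting

section Colorings

variable (le : V → V → Prop)

def RelMonotone [Preorder β] (f : V → β) : Prop :=
  ∀ x y, le x y → f x ≤ f y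

def RelStrictMono [Preorder β] (f : V → β) : Prop :=
  ∀ x y, le x y → f x ≤ f y ∧ (¬ le y x → f x < f y)

noncomputable def monotoneCount (q : ℕ) : ℕ :=
  Nat.card {f : V → Fin q // RelMonotone le f}

noncomputable def strictMonoCount (q : ℕ) : ℕ :=
  Nat.card {f : V → Fin q // RelStrictMono le f}

variable {le} {γ : Type*} [PartialOrder γ] {π : V → γ} {σ : γ → V}

theorem RelStrictMono.relMonotone [Preorder β] {f : V → β} (hf : RelStrictMono le f) :
    RelMonotone le f :=
  fun x y h => (hf x y h).1

theorem RelStrictMono.lt_or_le [Preorder β] {f : V → β} (hf : RelStrictMono le f) {x y : V}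
    (h : le x y) : f x < f y ∨ le y x :=
  (em (le y x)).elim Or.inr fun hyx => Or.inl ((hf x y h).2 hyx)

def relMonotoneEquiv [PartialOrder β] (hπ : ∀ x y, π x ≤ π y ↔ le x y)
    (hσ : LeftInverse π σ) : {f : V → β // RelMonotone le f} ≃ {g : γ → β // Monotone g} where
  toFun f := ⟨f.1 ∘ σ, fun x y hxy => f.2 _ _ ((hπ _ _).1 (by simpa [hσ x, hσ y] using hxy))⟩
  invFun g := ⟨g.1 ∘ π, fun x y hxy => g.2 ((hπ x y).2 hxy)⟩
  left_inv f := Subtype.ext <| funext fun x =>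
    le_antisymm (f.2 _ _ ((hπ _ _).1 (hσ (π x)).le)) (f.2 _ _ ((hπ _ _).1 (hσ (π x)).ge))
  right_inv g := Subtype.ext <| funext fun y => congrArg g.1 (hσ y)

def relStrictMonoEquiv [PartialOrder β] (hπ : ∀ x y, π x ≤ π y ↔ le x y)
    (hσ : LeftInverse π σ) :
    {f : V → β // RelStrictMono le f} ≃ {g : γ → β // StrictMono g} where
  toFun f := ⟨f.1 ∘ σ, fun x y hxy => by
    rw [← hσ x, ← hσ y, lt_iff_le_not_ge, hπ, hπ] at hxy
    exact (f.2 _ _ hxy.1).2 hxy.2⟩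
  invFun g := ⟨g.1 ∘ π, fun x y hxy =>
    ⟨g.2.monotone ((hπ x y).2 hxy), fun hyx => g.2 (lt_iff_le_not_ge.2 ⟨(hπ x y).2 hxy,
      fun h => hyx ((hπ y x).1 h)⟩)⟩⟩
  left_inv f := Subtype.ext <| funext fun x =>
    le_antisymm (f.2 _ _ ((hπ _ _).1 (hσ (π x)).le)).1 (f.2 _ _ ((hπ _ _).1 (hσ (π x)).ge)).1
  right_inv g := Subtype.ext <| funext fun y => congrArg g.1 (hσ y)

theorem exists_rank_of_total [Finite V] [IsPreorder V le] (htot : ∀ x y, le x y ∨ le y x) :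
    ∃ (π : V → Fin (Nat.card (Antisymmetrization V le))) (σ : Fin _ → V),
      (∀ x y, π x ≤ π y ↔ le x y) ∧ LeftInverse π σ := by
  classical
  let _ : Preorder V := { le := le, le_refl := refl_of le, le_trans := fun _ _ _ => trans_of le }
  have : Std.Total (α := V) (· ≤ ·) := ⟨htot⟩
  have : Finite (Antisymmetrization V (· ≤ ·)) := Quotient.finite _
  have : Fintype (Antisymmetrization V (· ≤ ·)) := Fintype.ofFinite _
  let e := monoEquivOfFin (Antisymmetrization V (· ≤ ·)) (Nat.card_eq_fintype_card).symm
  refine ⟨e.symm ∘ toAntisymmetrization (· ≤ ·), ofAntisymmetrization (· ≤ ·) ∘ e,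
    fun x y => ?_, fun k => ?_⟩
  · simp only [comp_apply, e.symm.le_iff_le, toAntisymmetrization_le_toAntisymmetrization_iff]
    rfl
  · simp [toAntisymmetrization_ofAntisymmetrization]

theorem monotoneCount_of_total [Finite V] [IsPreorder V le] (htot : ∀ x y, le x y ∨ le y x)
    (q : ℕ) : monotoneCount le q =
      (q + Nat.card (Antisymmetrization V le) - 1).choose (Nat.card (Antisymmetrization V le)) := by
  obtain ⟨π, σ, hπ, hσ⟩ := exists_rank_of_total htot
  rw [monotoneCount, Nat.card_congr (relMonotoneEquiv hπ hσ), card_monotone_fin]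

theorem strictMonoCount_of_total [Finite V] [IsPreorder V le] (htot : ∀ x y, le x y ∨ le y x)
    (q : ℕ) : strictMonoCount le q = q.choose (Nat.card (Antisymmetrization V le)) := by
  obtain ⟨π, σ, hπ, hσ⟩ := exists_rank_of_total htot
  rw [strictMonoCount, Nat.card_congr (relStrictMonoEquiv hπ hσ), card_strictMono_fin]

end Colorings

theorem exists_multichoose_polynomial (c : ℕ) : ∃ p : ℚ[X], ∀ q : ℕ,
    p.eval (q : ℚ) = (q + c - 1).choose c ∧ p.eval (-(q : ℚ)) = (-1) ^ c * q.choose c := by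
  refine ⟨C (c ! : ℚ)⁻¹ * ascPochhammer ℚ c, fun q => ⟨?_, ?_⟩⟩
  · rw [eval_mul, eval_C, ← ascPochhammer_eval_cast, ascPochhammer_nat_eq_ascFactorial,
      Nat.ascFactorial_eq_factorial_mul_choose', Nat.cast_mul, inv_mul_cancel_left₀ (by positivity)]
  · rw [eval_mul, eval_C, ascPochhammer_eval_neg_eq_descPochhammer,
      descPochhammer_eval_eq_descFactorial, Nat.descFactorial_eq_factorial_mul_choose, Nat.cast_mul,
      mul_left_comm, inv_mul_cancel_left₀ (by positivity)]

section Refinement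

variable (le : V → V → Prop) (u v : V)

def addLE (x y : V) : Prop :=
  le x y ∨ (le x u ∧ le v y)

/-- The preorder generated by `le`, `u ≤ v` and `v ≤ u`. -/
def identify (x y : V) : Prop :=
  le x y ∨ ((le x u ∨ le x v) ∧ (le u y ∨ le v y))

variable [IsPreorder V le]

instance : IsPreorder V (addLE le u v) where
  refl x := Or.inl (refl x)
  trans x y z := by
    rintro (hxy | ⟨hxu, hvy⟩) (hyz | ⟨hyu, hvz⟩)
    · exact Or.inl (_root_.trans hxy hyz)
    · exact Or.inr ⟨_root_.trans hxy hyu, hvz⟩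
    · exact Or.inr ⟨hxu, _root_.trans hvy hyz⟩
    · exact Or.inr ⟨hxu, hvz⟩

instance : IsPreorder V (identify le u v) where
  refl x := Or.inl (refl x)
  trans x y z := by
    rintro (hxy | ⟨hx, hy⟩) (hyz | ⟨hy', hz⟩)
    · exact Or.inl (_root_.trans hxy hyz)
    · exact Or.inr ⟨hy'.imp (_root_.trans hxy) (_root_.trans hxy), hz⟩
    · exact Or.inr ⟨hx, hy.imp (_root_.trans · hyz) (_root_.trans · hyz)⟩
    · exact Or.inr ⟨hx, hz⟩

variable {le u v}

theorem relMonotone_addLE_iff [Preorder β] {f : V → β} :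
    RelMonotone (addLE le u v) f ↔ RelMonotone le f ∧ f u ≤ f v := by
  refine ⟨fun h => ⟨fun x y hxy => h x y (Or.inl hxy), h u v (Or.inr ⟨refl u, refl v⟩)⟩, ?_⟩
  rintro ⟨h, huv⟩ x y (hxy | ⟨hxu, hvy⟩)
  exacts [h x y hxy, ((h x u hxu).trans huv).trans (h v y hvy)]

theorem relMonotone_identify_iff [PartialOrder β] {f : V → β} :
    RelMonotone (identify le u v) f ↔ RelMonotone le f ∧ f u = f v := by
  refine ⟨fun h => ⟨fun x y hxy => h x y (Or.inl hxy),
    le_antisymm (h u v (Or.inr ⟨Or.inl (refl u), Or.inr (refl v)⟩))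
      (h v u (Or.inr ⟨Or.inr (refl v), Or.inl (refl u)⟩))⟩, ?_⟩
  rintro ⟨h, huv⟩ x y (hxy | ⟨hx, hy⟩)
  · exact h x y hxy
  · calc f x ≤ f u := hx.elim (h x u) fun hxv => (h x v hxv).trans huv.ge
      _ ≤ f y := hy.elim (h u y) fun hvy => huv.le.trans (h v y hvy)

theorem le_of_addLE_of_addLE (hvu : ¬ le v u) {x y : V} (hxy : addLE le u v x y)
    (hyx : addLE le u v y x) : le x y := by
  rcases hxy with hxy | ⟨hxu, hvy⟩
  · exact hxy
  rcases hyx with hyx | ⟨-, hvx⟩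
  · exact absurd (_root_.trans (_root_.trans hvy hyx) hxu) hvu
  · exact absurd (_root_.trans hvx hxu) hvu

theorem relStrictMono_addLE_iff [Preorder β] (hvu : ¬ le v u) {f : V → β} :
    RelStrictMono (addLE le u v) f ↔ RelStrictMono le f ∧ f u < f v := by
  constructor
  · intro h
    refine ⟨fun x y hxy => ⟨(h x y (Or.inl hxy)).1, fun hyx => (h x y (Or.inl hxy)).2
      fun hyx' => hyx (le_of_addLE_of_addLE hvu hyx' (Or.inl hxy))⟩, ?_⟩
    exact (h u v (Or.inr ⟨refl u, refl v⟩)).2 fun hvu' => hvu (le_of_addLE_of_addLE hvu hvu'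
      (Or.inr ⟨refl u, refl v⟩))
  · rintro ⟨h, huv⟩ x y (hxy | ⟨hxu, hvy⟩)
    · exact ⟨(h x y hxy).1, fun hyx => (h x y hxy).2 fun hyx' => hyx (Or.inl hyx')⟩
    · have hlt : f x < f y := ((h x u hxu).1.trans_lt huv).trans_le (h v y hvy).1
      exact ⟨hlt.le, fun _ => hlt⟩

theorem antisymmRel_addLE_iff (hvu : ¬ le v u) {x y : V} :
    AntisymmRel (addLE le u v) x y ↔ AntisymmRel le x y :=
  ⟨fun h => ⟨le_of_addLE_of_addLE hvu h.1 h.2, le_of_addLE_of_addLE hvu h.2 h.1⟩,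
    fun h => ⟨Or.inl h.1, Or.inl h.2⟩⟩

theorem card_antisymmetrization_addLE (hvu : ¬ le v u) :
    Nat.card (Antisymmetrization V (addLE le u v)) = Nat.card (Antisymmetrization V le) :=
  Nat.card_congr (Quotient.congrRight fun _ _ => antisymmRel_addLE_iff hvu)

theorem le_of_identify_of_le (huv : ¬ le u v) (hvu : ¬ le v u) {x y : V}
    (hyx : identify le u v y x) (hxy : le x y) : le y x := by
  rcases hyx with hyx | ⟨hyu | hyv, hux | hvx⟩
  · exact hyx
  · exact _root_.trans hyu hux
  · exact absurd (_root_.trans (_root_.trans hvx hxy) hyu) hvu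
  · exact absurd (_root_.trans (_root_.trans hux hxy) hyv) huv
  · exact _root_.trans hyv hvx

theorem relStrictMono_identify_iff [PartialOrder β] (huv : ¬ le u v) (hvu : ¬ le v u)
    {f : V → β} : RelStrictMono (identify le u v) f ↔ RelStrictMono le f ∧ f u = f v := by
  constructor
  · intro h
    refine ⟨fun x y hxy => ⟨(h x y (Or.inl hxy)).1, fun hyx => (h x y (Or.inl hxy)).2
      fun hyx' => hyx (le_of_identify_of_le huv hvu hyx' hxy)⟩,
      (relMonotone_identify_iff.1 h.relMonotone).2⟩
  rintro ⟨h, heq⟩ x y (hxy | ⟨hx, hy⟩)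
  · exact ⟨(h x y hxy).1, fun hyx => (h x y hxy).2 fun hyx' => hyx (Or.inl hyx')⟩
  have hfx : f x ≤ f u ∧ (f x < f u ∨ le u x ∨ le v x) := by
    rcases hx with hxu | hxv
    · exact ⟨(h x u hxu).1, (h.lt_or_le hxu).imp_right Or.inl⟩
    · exact ⟨(h x v hxv).1.trans heq.ge, (h.lt_or_le hxv).imp (·.trans_eq heq.symm) Or.inr⟩
  have hfy : f u ≤ f y ∧ (f u < f y ∨ le y u ∨ le y v) := by
    rcases hy with huy | hvy
    · exact ⟨(h u y huy).1, (h.lt_or_le huy).imp_right Or.inl⟩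
    · exact ⟨heq.le.trans (h v y hvy).1, (h.lt_or_le hvy).imp heq.trans_lt Or.inr⟩
  refine ⟨hfx.1.trans hfy.1, fun hyx => ?_⟩
  rcases hfx.2 with hlt | hux
  · exact hlt.trans_le hfy.1
  rcases hfy.2 with hlt | hyl
  · exact hfx.1.trans_lt hlt
  · exact absurd (Or.inr ⟨hyl, hux⟩) hyx

theorem antisymmRel_of_le_of_le (huv : ¬ le u v) (hvu : ¬ le v u) {x : V}
    (hx : le x u ∨ le x v) (hx' : le u x ∨ le v x) :
    AntisymmRel le x u ∨ AntisymmRel le x v := by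
  rcases hx with hxu | hxv <;> rcases hx' with hux | hvx
  · exact Or.inl ⟨hxu, hux⟩
  · exact absurd (_root_.trans hvx hxu) hvu
  · exact absurd (_root_.trans hux hxv) huv
  · exact Or.inr ⟨hxv, hvx⟩

theorem antisymmRel_identify (huv : ¬ le u v) (hvu : ¬ le v u) {x y : V}
    (h : AntisymmRel (identify le u v) x y) :
    AntisymmRel le x y ∨ (AntisymmRel le x u ∨ AntisymmRel le x v) ∧
      (AntisymmRel le y u ∨ AntisymmRel le y v) := by
  have below {a b : V} (hab : le a b) : le b u ∨ le b v → le a u ∨ le a v :=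
    Or.imp (_root_.trans hab) (_root_.trans hab)
  have above {a b : V} (hab : le a b) : le u a ∨ le v a → le u b ∨ le v b :=
    Or.imp (_root_.trans · hab) (_root_.trans · hab)
  obtain ⟨hxy | ⟨hxl, hyu⟩, hyx | ⟨hyl, hxu⟩⟩ := h
  · exact Or.inl ⟨hxy, hyx⟩
  · exact Or.inr ⟨antisymmRel_of_le_of_le huv hvu (below hxy hyl) hxu,
      antisymmRel_of_le_of_le huv hvu hyl (above hxy hxu)⟩
  · exact Or.inr ⟨antisymmRel_of_le_of_le huv hvu hxl (above hyx hyu),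
      antisymmRel_of_le_of_le huv hvu (below hyx hxl) hyu⟩
  · exact Or.inr ⟨antisymmRel_of_le_of_le huv hvu hxl hxu,
      antisymmRel_of_le_of_le huv hvu hyl hyu⟩

theorem card_antisymmetrization_identify [Finite V] (huv : ¬ le u v) (hvu : ¬ le v u) :
    Nat.card (Antisymmetrization V (identify le u v)) + 1 = Nat.card (Antisymmetrization V le) := by
  classical
  have : Finite (Antisymmetrization V le) := Quotient.finite _
  let g : {c : Antisymmetrization V le // c ≠ toAntisymmetrization le v} →
      Antisymmetrization V (identify le u v) := fun c =>
    Quotient.map (sa := AntisymmRel.setoid V le) (sb := AntisymmRel.setoid V (identify le u v))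
      id (fun _ _ h => ⟨Or.inl h.1, Or.inl h.2⟩) c.1
  have hg : Bijective g := by
    constructor
    · rintro ⟨⟨x⟩, hx⟩ ⟨⟨y⟩, hy⟩ hxy
      have hx : ¬ AntisymmRel le x v := fun h => hx (Quotient.sound h)
      have hy : ¬ AntisymmRel le y v := fun h => hy (Quotient.sound h)
      refine Subtype.ext (Quotient.sound ?_)
      rcases antisymmRel_identify huv hvu (Quotient.exact hxy) with hxy | ⟨hxu | hxv, hyu | hyv⟩
      exacts [hxy, hxu.trans hyu.symm, absurd hyv hy, absurd hxv hx, absurd hxv hx]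
    · rintro ⟨y⟩
      by_cases hy : AntisymmRel le y v
      · refine ⟨⟨toAntisymmetrization le u, fun h => huv (Quotient.exact h).1⟩,
          Quotient.sound ⟨Or.inr ⟨Or.inl (refl u), Or.inr hy.2⟩,
            Or.inr ⟨Or.inr hy.1, Or.inl (refl u)⟩⟩⟩
      · exact ⟨⟨toAntisymmetrization le y, fun h => hy (Quotient.exact h)⟩, rfl⟩
  rw [← Nat.card_congr (Equiv.ofBijective g hg), ← Finite.card_option,
    Nat.card_congr (Equiv.optionSubtypeNe _)]

theorem monotoneCount_add_monotoneCount_identify [Finite V] (q : ℕ) :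
    monotoneCount le q + monotoneCount (identify le u v) q =
      monotoneCount (addLE le u v) q + monotoneCount (addLE le v u) q := by
  simp only [monotoneCount, relMonotone_addLE_iff, relMonotone_identify_iff]
  exact card_add_card_eq_card_le_add_card_ge _ (fun f : V → Fin q => f u) (· v)

theorem strictMonoCount_eq_add [Finite V] (huv : ¬ le u v) (hvu : ¬ le v u) (q : ℕ) :
    strictMonoCount le q = strictMonoCount (addLE le u v) q + strictMonoCount (addLE le v u) q +
      strictMonoCount (identify le u v) q := by
  simp only [strictMonoCount, relStrictMono_addLE_iff hvu, relStrictMono_addLE_iff huv,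
    relStrictMono_identify_iff huv hvu]
  exact card_eq_card_lt_add_card_gt_add_card_eq _ (fun f : V → Fin q => f u) (· v)

end Refinement

theorem ncard_setOf_not_lt [Finite V] {le le' : V → V → Prop} (hle : ∀ x y, le x y → le' x y)
    {u v : V} (h' : le' u v) (h : ¬ le u v) :
    {p : V × V | ¬ le' p.1 p.2}.ncard < {p : V × V | ¬ le p.1 p.2}.ncard :=
  Set.ncard_lt_ncard ⟨fun _ hp h => hp (hle _ _ h),
    fun hsub => hsub (show (u, v) ∈ {p : V × V | ¬ le p.1 p.2} from h) h'⟩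

/-- Stanley's reciprocity theorem for order polynomials. -/
theorem exists_reciprocal_polynomial [Finite V] (le : V → V → Prop) [IsPreorder V le] :
    ∃ p : ℚ[X], ∀ q : ℕ, p.eval (q : ℚ) = monotoneCount le q ∧
      p.eval (-(q : ℚ)) = (-1) ^ Nat.card (Antisymmetrization V le) * strictMonoCount le q := by
  induction hn : {p : V × V | ¬ le p.1 p.2}.ncard using Nat.strong_induction_on
    generalizing le with
  | _ n ih =>
  by_cases htot : ∀ x y, le x y ∨ le y x
  · obtain ⟨p, hp⟩ := exists_multichoose_polynomial (Nat.card (Antisymmetrization V le))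
    refine ⟨p, fun q => ?_⟩
    rw [monotoneCount_of_total htot, strictMonoCount_of_total htot]
    exact_mod_cast hp q
  push Not at htot
  obtain ⟨u, v, huv, hvu⟩ := htot
  obtain ⟨p₁, hp₁⟩ := ih _ (hn ▸ ncard_setOf_not_lt (fun _ _ => Or.inl)
    (Or.inr ⟨refl u, refl v⟩) huv) (addLE le u v) rfl
  obtain ⟨p₂, hp₂⟩ := ih _ (hn ▸ ncard_setOf_not_lt (fun _ _ => Or.inl)
    (Or.inr ⟨refl v, refl u⟩) hvu) (addLE le v u) rfl
  obtain ⟨p₃, hp₃⟩ := ih _ (hn ▸ ncard_setOf_not_lt (fun _ _ => Or.inl)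
    (Or.inr ⟨Or.inl (refl u), Or.inr (refl v)⟩) huv) (identify le u v) rfl
  refine ⟨p₁ + p₂ - p₃, fun q => ⟨?_, ?_⟩⟩
  · have := congrArg (Nat.cast (R := ℚ))
      (monotoneCount_add_monotoneCount_identify (le := le) (u := u) (v := v) q)
    push_cast at this
    rw [eval_sub, eval_add, (hp₁ q).1, (hp₂ q).1, (hp₃ q).1]
    linarith
  · rw [eval_sub, eval_add, (hp₁ q).2, (hp₂ q).2, (hp₃ q).2, card_antisymmetrization_addLE hvu,
      card_antisymmetrization_addLE huv, strictMonoCount_eq_add huv hvu,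
      ← card_antisymmetrization_identify huv hvu]
    push_cast
    ring

end OrderPolynomial

open OrderPolynomial

section Digraph

variable {V A : Type} (s t : A → V)

def arcRel (x y : V) : Prop :=
  ∃ a, s a = x ∧ t a = y

variable {s t}

theorem exists_walk_of_reflTransGen {a : A} {y : V} (h : ReflTransGen (arcRel s t) y (s a)) :
    ∃ (n : ℕ) (c : ℕ → A), s (c 0) = y ∧ c n = a ∧ ∀ i < n, t (c i) = s (c (i + 1)) := by
  induction h using ReflTransGen.head_induction_on with
  | refl => exact ⟨0, fun _ => a, rfl, rfl, by simp⟩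
  | head hyz _ ih =>
    obtain ⟨b, rfl, rfl⟩ := hyz
    obtain ⟨n, c, hc₀, hcn, hc⟩ := ih
    refine ⟨n + 1, fun | 0 => b | i + 1 => c i, rfl, hcn, fun i hi => ?_⟩
    cases i with
    | zero => exact hc₀.symm
    | succ i => exact hc i (by omega)

theorem isCyclicArc_iff_reflTransGen {a : A} :
    IsCyclicArc s t a ↔ ReflTransGen (arcRel s t) (t a) (s a) := by
  constructor
  · rintro ⟨n, hn, c, hc, i, rfl⟩
    have hreach (k : ℕ) : ReflTransGen (arcRel s t) (s (c (i + 1))) (s (c (i + 1 + k))) := by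
      induction k with
      | zero => simpa using ReflTransGen.refl
      | succ k ih =>
        rw [Nat.cast_succ, ← add_assoc]
        exact ih.tail ⟨c (i + 1 + k), rfl, hc _⟩
    have hback : i + 1 + ((n - 1 : ℕ) : ZMod n) = i := by
      rw [Nat.cast_pred hn, ZMod.natCast_self]
      ring
    rw [hc i]
    simpa [hback] using hreach (n - 1)
  · intro h
    obtain ⟨n, c, hc₀, hcn, hc⟩ := exists_walk_of_reflTransGen h
    refine ⟨n + 1, n.succ_pos, fun i : Fin (n + 1) => c i, fun i => ?_, Fin.last n, hcn⟩
    -- `ZMod (n + 1)` is `Fin (n + 1)` by definition.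
    change Fin (n + 1) at i
    show t (c i) = s (c (i + 1 : Fin (n + 1)))
    rw [Fin.val_add_one]
    split_ifs with hi
    · rw [hi, Fin.val_last, hcn, hc₀]
    · exact hc i (Fin.val_lt_last hi)

theorem relMonotone_reflTransGen_iff {β : Type*} [Preorder β] {r : V → V → Prop} {f : V → β} :
    RelMonotone (ReflTransGen r) f ↔ ∀ x y, r x y → f x ≤ f y := by
  refine ⟨fun h x y hxy => h x y (.single hxy), fun h x y hxy => ?_⟩
  induction hxy with
  | refl => exact le_rfl
  | tail _ hbc ih => exact ih.trans (h _ _ hbc)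

theorem relStrictMono_reflTransGen_iff {β : Type*} [PartialOrder β] {r : V → V → Prop}
    {f : V → β} : RelStrictMono (ReflTransGen r) f ↔
      (∀ x y, AntisymmRel (ReflTransGen r) x y → f x = f y) ∧
        ∀ x y, r x y → ¬ ReflTransGen r y x → f x < f y := by
  refine ⟨fun h => ⟨fun x y hxy => le_antisymm (h x y hxy.1).1 (h y x hxy.2).1,
    fun x y hxy => (h x y (.single hxy)).2⟩, fun ⟨heq, hlt⟩ x y hxy => ?_⟩
  induction hxy with
  | refl => exact ⟨le_rfl, fun h => absurd .refl h⟩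
  | @tail b c _ hbc ih =>
    by_cases hcb : ReflTransGen r c b
    · have hfbc := heq b c ⟨.single hbc, hcb⟩
      exact ⟨ih.1.trans hfbc.le, fun hcx => (ih.2 fun hbx => hcx (hcb.trans hbx)).trans_eq hfbc⟩
    · have hfbc := hlt b c hbc hcb
      exact ⟨ih.1.trans hfbc.le, fun _ => ih.1.trans_lt hfbc⟩

theorem relMonotone_arcRel_iff {β : Type*} [Preorder β] {f : V → β} :
    RelMonotone (ReflTransGen (arcRel s t)) f ↔ ∀ a, f (s a) ≤ f (t a) :=
  relMonotone_reflTransGen_iff.trans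
    ⟨fun h a => h _ _ ⟨a, rfl, rfl⟩, by rintro h _ _ ⟨a, rfl, rfl⟩; exact h a⟩

theorem relStrictMono_arcRel_iff {β : Type*} [PartialOrder β] {f : V → β} :
    RelStrictMono (ReflTransGen (arcRel s t)) f ↔
      (∀ u v, (sccSetoid s t).r u v → f u = f v) ∧
        ∀ a, ¬ IsCyclicArc s t a → f (s a) < f (t a) := by
  refine relStrictMono_reflTransGen_iff.trans (and_congr Iff.rfl ⟨fun h a ha => ?_, ?_⟩)
  · exact h _ _ ⟨a, rfl, rfl⟩ (mt isCyclicArc_iff_reflTransGen.2 ha)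
  · rintro h _ _ ⟨a, rfl, rfl⟩ hyx
    exact h a (mt isCyclicArc_iff_reflTransGen.1 hyx)

end Digraph

theorem weak_chromatic_reciprocity_general (V A : Type) [Fintype V]
    (s t : A → V)
    (χ : Polynomial ℚ)
    (hχ : ∀ q : ℕ, 0 < q → χ.eval (q : ℚ) =
      (Nat.card {f : V → Fin q // ∀ a : A, f (s a) ≤ f (t a)} : ℚ)) :
    ∀ q : ℕ, 0 < q →
      χ.eval (-(q : ℚ)) =
        (-1 : ℚ) ^ (Nat.card (Quotient (sccSetoid s t))) *
        (Nat.card {f : V → Fin q //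
          (∀ u v : V, (sccSetoid s t).r u v → f u = f v) ∧
          (∀ a : A, ¬ IsCyclicArc s t a → f (s a) < f (t a))} : ℚ) := by
  obtain ⟨p, hp⟩ := exists_reciprocal_polynomial (ReflTransGen (arcRel s t))
  have hχp : χ = p := by
    refine eq_of_infinite_eval_eq _ _ (Set.infinite_of_injective_forall_mem
      (f := fun n : ℕ => ((n + 1 : ℕ) : ℚ)) (fun m n h => by simpa using h) fun n => ?_)
    show χ.eval _ = p.eval _
    rw [hχ _ n.succ_pos, (hp _).1, monotoneCount]
    exact congrArg _ (Nat.card_congr (Equiv.subtypeEquivRight fun f => relMonotone_arcRel_iff.symm))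
  intro q _
  rw [hχp, (hp q).2, strictMonoCount,
    Nat.card_congr (Equiv.subtypeEquivRight fun f => relStrictMono_arcRel_iff)]
  -- `sccSetoid s t` is `AntisymmRel.setoid V (ReflTransGen (arcRel s t))` by definition.
  rfl

/-- for a digraph `D = (V,A)` with weak-chromatic polynomial `χ^≥_D`,
for every positive integer `q`, `χ^≥_D(−q) = (−1)^c · N(q)` where `c` is the number of
strongly connected components of `D` and `N(q)` is the number of `q`-colorings constant
on each strongly connected component and strictly increasing along each non-cyclic arc
(i.e. the number of strict-ascent `q`-colorings of `acyc(D)`). -/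
theorem weak_chromatic_reciprocity (V A : Type) [Fintype V] [Fintype A]
    (s t : A → V)
    (χ : Polynomial ℚ)
    (hχ : ∀ q : ℕ, 0 < q → χ.eval (q : ℚ) =
      (Nat.card {f : V → Fin q // ∀ a : A, f (s a) ≤ f (t a)} : ℚ)) :
    ∀ q : ℕ, 0 < q →
      χ.eval (-(q : ℚ)) =
        (-1 : ℚ) ^ (Nat.card (Quotient (sccSetoid s t))) *
        (Nat.card {f : V → Fin q //
          (∀ u v : V, (sccSetoid s t).r u v → f u = f v) ∧
          (∀ a : A, ¬ IsCyclicArc s t a → f (s a) < f (t a))} : ℚ) :=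
  weak_chromatic_reciprocity_general V A s t χ hχ
end

section
/- Let D = (V,A) be a digraph. Then, as polynomials in y and z, Σ y^{|S|} z^{|T|} = (−1)^{|V|} · B_D(−1, 1+y, 1+z), where the sum is over all ordered partitions A = R ⊎ S ⊎ T into three disjoint (possibly empty) sets such that the digraph obtained from D by deleting the arcs in R and reversing the source and target of each arc in T is acyclic, and B_D(−1, 1+y, 1+z) denotes the evaluation of the B-polynomial of D at q = −1. -/
/-!
Choosing, for every arc, one of the terms `1`, `y`, `z` of `(1 + y)^[ascent] (1 + z)^[descent]`
writes `B_D(q, 1 + y, 1 + z)` as `∑ y^|S| z^|T| Ω_{D'}(q)`, the sum over all `A = R ⊎ S ⊎ T`,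
where `D'` is `D` with `R` deleted and `T` reversed, and `Ω_{D'}(q)` counts the colorings
`V → [q]` that strictly increase along every arc of `D'`. Sorting these colorings by their image
gives `Ω_{D'}(q) = ∑ₖ sₖ (q choose k)`, with `sₖ` the number of them onto `[k]`, so `Ω_{D'}` is a
polynomial and `Ω_{D'}(-1) = ∑ₖ (-1)^k sₖ`. If `D'` has a directed cycle there are no such
colorings at all. If `D'` is acyclic, the top color class of a coloring onto `[k + 1]` is a
nonempty set `U` of sinks, so `s_{k+1}(D') = ∑_U sₖ(D' - U)`; by induction on `|V|` and
`∑_{U ⊆ sinks} (-1)^|U| = 0` this gives `Ω_{D'}(-1) = (-1)^|V|`.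
-/

open Finset

/-- A digraph (arcs `A`, source map `s`, target map `t`) contains a directed cycle. -/
def HasDicycle {V A : Type} (s t : A → V) : Prop :=
  ∃ n : ℕ, 0 < n ∧ ∃ c : ZMod n → A, ∀ i, t (c i) = s (c (i + 1))

open scoped Classical

open Polynomial

theorem Ring.choose_neg_one {R : Type*} [CommRing R] [BinomialRing R] (k : ℕ) :
    Ring.choose (-1 : R) k = (-1) ^ k := by
  rw [Ring.choose_neg', Ring.multichoose_one, Units.smul_def, zsmul_one,
    Int.cast_negOnePow_natCast]

theorem eval_ringChoose_X (x : ℚ) (k : ℕ) :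
    (Ring.choose (X : ℚ[X]) k).eval x = Ring.choose x k := by
  simpa using Ring.map_choose (evalRingHom x) X k

theorem one_add_pow_mul_one_add_pow {R A : Type*} [CommSemiring R] [Fintype A] [DecidableEq A]
    (y z : R) (P Q : A → Prop) [DecidablePred P] [DecidablePred Q] (hPQ : ∀ a, P a → ¬ Q a) :
    (1 + y) ^ #{a | P a} * (1 + z) ^ #{a | Q a} = ∑ g : A → Fin 3,
      ∏ a, if (![True, P a, Q a] : Fin 3 → Prop) (g a) then ![1, y, z] (g a) else 0 := by
  rw [← prod_const, ← prod_const, prod_filter, prod_filter, ← prod_mul_distrib]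
  refine (prod_congr rfl fun a _ => ?_).trans (Fintype.prod_sum fun a (i : Fin 3) =>
    if (![True, P a, Q a] : Fin 3 → Prop) i then ![1, y, z] i else 0)
  by_cases hP : P a
  · simp [Fin.sum_univ_three, hP, hPQ a hP]
  · by_cases hQ : Q a <;> simp [Fin.sum_univ_three, hP, hQ]

theorem MvPolynomial.eval_vecCons_eq_of_forall_natCast {K : Type*} [Field K] [CharZero K]
    {n : ℕ} {p : MvPolynomial (Fin (n + 1)) K} {P : K[X]} {v : Fin n → K}
    (h : ∀ q : ℕ, 0 < q → eval (Matrix.vecCons (q : K) v) p = P.eval (q : K)) (x : K) :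
    eval (Matrix.vecCons x v) p = P.eval x := by
  set Q : K[X] := eval₂ Polynomial.C (Matrix.vecCons Polynomial.X fun i => Polynomial.C (v i)) p
  have hQ : ∀ x, Q.eval x = eval (Matrix.vecCons x v) p := fun x => by
    rw [← coe_evalRingHom, eval₂_comp_left, MvPolynomial.eval]
    congr 1
    · ext; simp
    · ext i; cases i using Fin.cases <;> simp
  have hQP : Q = P := Polynomial.eq_of_infinite_eval_eq _ _ <|
    Set.infinite_of_injective_forall_mem (f := fun q : ℕ => ((q + 1 : ℕ) : K))
      (Nat.cast_injective.comp (add_left_injective 1)) fun q => by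
        simp only [Set.mem_ofPred_eq, hQ, h (q + 1) q.succ_pos]
  rw [← hQ, hQP]

variable {V A : Type} {s t : A → V}

theorem HasDicycle.exists_not_lt {α : Type*} [LinearOrder α] (h : HasDicycle s t) (f : V → α) :
    ∃ a, ¬ f (s a) < f (t a) := by
  obtain ⟨n, hn, c, hc⟩ := h
  have : NeZero n := ⟨hn.ne'⟩
  obtain ⟨i, -, hi⟩ := exists_max_image univ (fun i => f (s (c i))) univ_nonempty
  exact ⟨c i, by simpa [hc] using hi (i + 1) (mem_univ _)⟩

theorem hasDicycle_of_surjective [Finite V] [Nonempty V] (hs : Function.Surjective s) :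
    HasDicycle s t := by
  choose out hout using hs
  -- walking along chosen outgoing arcs eventually becomes periodic, and one period is a cycle
  set next : V → V := fun v => t (out v)
  obtain ⟨m, n, hne, heq⟩ :=
    Finite.exists_ne_map_eq_of_infinite (fun k : ℕ => next^[k] (Classical.arbitrary V))
  wlog hmn : m < n generalizing m n
  · exact this n m hne.symm heq.symm (by omega)
  have hv : Function.IsPeriodicPt next (n - m) (next^[m] (Classical.arbitrary V)) := by
    rw [Function.IsPeriodicPt, Function.IsFixedPt, ← Function.iterate_add_apply,
      Nat.sub_add_cancel hmn.le, heq]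
  have : NeZero (n - m) := ⟨by omega⟩
  refine ⟨n - m, by omega, fun i => out (next^[i.val] (next^[m] (Classical.arbitrary V))),
    fun i => ?_⟩
  rw [hout, ZMod.val_add, ZMod.val_one_eq_one_mod, Nat.add_mod_mod, hv.iterate_mod_apply,
    Function.iterate_succ_apply']

def deleteVertsSrc (s t : A → V) (U : Finset V) : {a // s a ∉ U ∧ t a ∉ U} → {v // v ∉ U} :=
  fun a => ⟨s a, a.2.1⟩

def deleteVertsTgt (s t : A → V) (U : Finset V) : {a // s a ∉ U ∧ t a ∉ U} → {v // v ∉ U} :=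
  fun a => ⟨t a, a.2.2⟩

theorem not_hasDicycle_deleteVerts (h : ¬ HasDicycle s t) (U : Finset V) :
    ¬ HasDicycle (deleteVertsSrc s t U) (deleteVertsTgt s t U) :=
  fun ⟨n, hn, c, hc⟩ => h ⟨n, hn, fun i => (c i).1, fun i => congrArg Subtype.val (hc i)⟩

noncomputable section

variable [Fintype V]

def sinks (s : A → V) : Finset V := {v | ∀ a, s a ≠ v}

theorem sinks_nonempty [Nonempty V] (h : ¬ HasDicycle s t) : (sinks s).Nonempty := by
  by_contra hempty
  refine h (hasDicycle_of_surjective fun v => ?_)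
  by_contra hv
  push Not at hv
  exact hempty ⟨v, by simpa [sinks] using hv⟩

variable [DecidableEq V]

theorem Fintype.card_subtype_notMem (U : Finset V) :
    Fintype.card {v // v ∉ U} = Fintype.card V - #U := by
  rw [Fintype.card_subtype_compl, Fintype.card_coe]

def strictColorings (s t : A → V) (q : ℕ) : Finset (V → Fin q) := {f | ∀ a, f (s a) < f (t a)}

def surjStrictCount (s t : A → V) (k : ℕ) : ℕ :=
  #{f ∈ strictColorings s t k | Function.Surjective f}

theorem strictColorings_eq_empty (h : HasDicycle s t) (q : ℕ) : strictColorings s t q = ∅ := by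
  ext f
  simpa [strictColorings] using h.exists_not_lt f

theorem surjStrictCount_eq_zero_of_card_lt {k : ℕ} (hk : Fintype.card V < k) :
    surjStrictCount s t k = 0 := by
  refine card_eq_zero.2 (filter_eq_empty_iff.2 fun f _ hf => ?_)
  simpa using (Fintype.card_le_of_surjective f hf).trans_lt hk

theorem surjStrictCount_zero_of_isEmpty [IsEmpty V] : surjStrictCount s t 0 = 1 := by
  have : IsEmpty A := ⟨fun a => isEmptyElim (s a)⟩
  simp [surjStrictCount, strictColorings, Function.Surjective]

theorem surjStrictCount_zero_of_nonempty [Nonempty V] : surjStrictCount s t 0 = 0 := by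
  simp [surjStrictCount]

theorem surjStrictCount_eq_card_image_eq {q : ℕ} (T : Finset (Fin q)) :
    surjStrictCount s t #T = #{f ∈ strictColorings s t q | univ.image f = T} := by
  set e := T.orderEmbOfFin rfl
  have he : univ.image e = T := by
    rw [← coe_inj, coe_image, coe_univ, Set.image_univ, T.range_orderEmbOfFin]
  simp only [surjStrictCount, strictColorings, filter_filter]
  refine card_nbij (fun f => e ∘ f) (fun f hf => ?_) (fun f _ g _ hfg => ?_) (fun f hf => ?_)
  · simp only [mem_coe, mem_filter, mem_univ, true_and] at hf ⊢
    refine ⟨fun a => e.lt_iff_lt.2 (hf.1 a), ?_⟩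
    rw [← image_image, image_univ_of_surjective hf.2, he]
  · exact funext fun v => e.injective (congrFun hfg v)
  · simp only [mem_coe, mem_filter, mem_univ, true_and] at hf
    have hfT : ∀ v, ∃ i, e i = f v := fun v => by
      simpa [← he] using hf.2.le (mem_image_of_mem f (mem_univ v))
    choose g hg using hfT
    refine ⟨g, ?_, funext hg⟩
    simp only [mem_coe, mem_filter, mem_univ, true_and]
    refine ⟨fun a => e.lt_iff_lt.1 (by simpa only [hg] using hf.1 a), fun i => ?_⟩
    obtain ⟨v, -, hv⟩ := mem_image.1 (hf.2.ge (he ▸ mem_image_of_mem e (mem_univ i)))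
    exact ⟨v, e.injective (by rw [hg, hv])⟩

theorem card_strictColorings (q : ℕ) :
    #(strictColorings s t q) =
      ∑ k ∈ range (Fintype.card V + 1), q.choose k * surjStrictCount s t k := by
  have hfib : #(strictColorings s t q) =
      ∑ T ∈ (univ : Finset (Fin q)).powerset, surjStrictCount s t #T := by
    rw [card_eq_sum_card_fiberwise fun f _ => mem_powerset.2 (subset_univ (univ.image f))]
    exact sum_congr rfl fun T _ => (surjStrictCount_eq_card_image_eq T).symm
  have hvanish : ∀ k ∉ range (q + 1) ∩ range (Fintype.card V + 1),
      q.choose k * surjStrictCount s t k = 0 := fun k hk => by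
    rw [mem_inter, mem_range, mem_range, not_and_or, not_lt, not_lt] at hk
    rcases hk with hq | hV
    · rw [Nat.choose_eq_zero_of_lt (by omega), zero_mul]
    · rw [surjStrictCount_eq_zero_of_card_lt (by omega), mul_zero]
  rw [hfib, sum_powerset_apply_card, card_univ, Fintype.card_fin]
  simp only [smul_eq_mul]
  rw [← sum_subset inter_subset_left fun k _ hk => hvanish k hk,
    sum_subset inter_subset_right fun k _ hk => hvanish k hk]

def extendByLast {k : ℕ} (U : Finset V) (f : {v // v ∉ U} → Fin k) : V → Fin (k + 1) :=
  fun v => if h : v ∈ U then Fin.last k else (f ⟨v, h⟩).castSucc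

theorem extendByLast_spec {k : ℕ} {U : Finset V} (hU : U ∈ (sinks s).powerset.erase ∅)
    {f : {v // v ∉ U} → Fin k} (hf : ∀ a, f (deleteVertsSrc s t U a) < f (deleteVertsTgt s t U a))
    (hsurj : Function.Surjective f) :
    (∀ a, extendByLast U f (s a) < extendByLast U f (t a)) ∧
      Function.Surjective (extendByLast U f) ∧
        ({v | extendByLast U f v = Fin.last k} : Finset V) = U := by
  obtain ⟨hUne, hUs⟩ := mem_erase.1 hU
  have hsU : ∀ a, s a ∉ U := fun a ha => (mem_filter.1 (mem_powerset.1 hUs ha)).2 a rfl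
  refine ⟨fun a => ?_, fun j => ?_, ?_⟩
  · simp only [extendByLast, dif_neg (hsU a)]
    split_ifs with hta
    · exact Fin.castSucc_lt_last _
    · exact Fin.castSucc_lt_castSucc_iff.2 (hf ⟨a, hsU a, hta⟩)
  · induction j using Fin.lastCases with
    | last =>
      obtain ⟨u, hu⟩ := nonempty_iff_ne_empty.2 hUne
      exact ⟨u, dif_pos hu⟩
    | cast i =>
      obtain ⟨v, hv⟩ := hsurj i
      exact ⟨v, by simp [extendByLast, v.2, hv]⟩
  · ext v
    by_cases hv : v ∈ U <;> simp [extendByLast, hv, (Fin.castSucc_lt_last _).ne]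

theorem exists_extendByLast_eq {k : ℕ} {U : Finset V} {F : V → Fin (k + 1)}
    (hF : ∀ a, F (s a) < F (t a)) (hsurj : Function.Surjective F)
    (hFU : ({v | F v = Fin.last k} : Finset V) = U) :
    ∃ f : {v // v ∉ U} → Fin k, (∀ a, f (deleteVertsSrc s t U a) < f (deleteVertsTgt s t U a)) ∧
      Function.Surjective f ∧ extendByLast U f = F := by
  have hFU' : ∀ v, F v = Fin.last k ↔ v ∈ U := fun v => by simp [← hFU]
  have hne : ∀ v ∉ U, F v ≠ Fin.last k := fun v hv hFv => hv ((hFU' v).1 hFv)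
  refine ⟨fun v => (F v).castPred (hne v v.2), fun a => Fin.castPred_lt_castPred_iff.2 (hF a.1),
    fun i => ?_, funext fun v => ?_⟩
  · obtain ⟨v, hv⟩ := hsurj i.castSucc
    have hvU : v ∉ U := fun hvU => (Fin.castSucc_lt_last i).ne (hv ▸ (hFU' v).2 hvU)
    exact ⟨⟨v, hvU⟩, by simp [hv]⟩
  · by_cases hv : v ∈ U
    · simp [extendByLast, hv, (hFU' v).2 hv]
    · simp [extendByLast, hv]

theorem surjStrictCount_deleteVerts {k : ℕ} {U : Finset V}
    (hU : U ∈ (sinks s).powerset.erase ∅) :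
    surjStrictCount (deleteVertsSrc s t U) (deleteVertsTgt s t U) k =
      #{f ∈ strictColorings s t (k + 1) |
        Function.Surjective f ∧ ({v | f v = Fin.last k} : Finset V) = U} := by
  simp only [surjStrictCount, strictColorings, filter_filter]
  refine card_nbij (extendByLast U) (fun f hf => ?_) (fun f _ g _ hfg => ?_) (fun F hF => ?_)
  · simp only [mem_coe, mem_filter, mem_univ, true_and] at hf ⊢
    exact extendByLast_spec hU hf.1 hf.2
  · funext v
    simpa [extendByLast, v.2] using congrFun hfg v
  · simp only [mem_coe, mem_filter, mem_univ, true_and] at hF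
    obtain ⟨f, hf, hsurj, rfl⟩ := exists_extendByLast_eq hF.1 hF.2.1 hF.2.2
    exact ⟨f, by simpa only [mem_coe, mem_filter, mem_univ, true_and] using ⟨hf, hsurj⟩, rfl⟩

theorem surjStrictCount_succ (k : ℕ) :
    surjStrictCount s t (k + 1) = ∑ U ∈ (sinks s).powerset.erase ∅,
      surjStrictCount (deleteVertsSrc s t U) (deleteVertsTgt s t U) k := by
  have hmaps : ∀ f ∈ {f ∈ strictColorings s t (k + 1) | Function.Surjective f},
      ({v | f v = Fin.last k} : Finset V) ∈ (sinks s).powerset.erase ∅ := fun f hf => by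
    simp only [strictColorings, mem_filter, mem_univ, true_and] at hf
    refine mem_erase.2 ⟨nonempty_iff_ne_empty.1 ?_, mem_powerset.2 fun v hv => ?_⟩
    · obtain ⟨v, hv⟩ := hf.2 (Fin.last k)
      exact ⟨v, by simpa using hv⟩
    · simp only [sinks, mem_filter, mem_univ, true_and] at hv ⊢
      rintro a rfl
      exact (hf.1 a).not_ge (hv ▸ Fin.le_last _)
  rw [surjStrictCount, card_eq_sum_card_fiberwise hmaps]
  exact sum_congr rfl fun U hU => by rw [surjStrictCount_deleteVerts hU, filter_filter]

theorem sum_neg_one_pow_mul_surjStrictCount (h : ¬ HasDicycle s t) {N : ℕ}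
    (hN : Fintype.card V ≤ N) :
    ∑ k ∈ range (N + 1), (-1 : ℤ) ^ k * surjStrictCount s t k = (-1) ^ Fintype.card V := by
  induction N generalizing V A with
  | zero =>
    have : IsEmpty V := Fintype.card_eq_zero_iff.1 (by omega)
    simp [surjStrictCount_zero_of_isEmpty]
  | succ N ih =>
    have hU : ∀ U ∈ (sinks s).powerset.erase ∅, ∑ k ∈ range (N + 1),
        (-1 : ℤ) ^ (k + 1) * surjStrictCount (deleteVertsSrc s t U) (deleteVertsTgt s t U) k =
          -(-1) ^ (Fintype.card V - #U) := fun U hU => by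
      have hUpos : 0 < #U := card_pos.2 (nonempty_iff_ne_empty.2 (mem_erase.1 hU).1)
      simp only [pow_succ, mul_neg_one, neg_mul, sum_neg_distrib,
        ih (not_hasDicycle_deleteVerts h U) (by rw [Fintype.card_subtype_notMem]; omega),
        Fintype.card_subtype_notMem]
    rw [sum_range_succ']
    simp only [surjStrictCount_succ, Nat.cast_sum, mul_sum]
    rw [sum_comm, sum_congr rfl hU, pow_zero, one_mul]
    cases isEmpty_or_nonempty V with
    | inl hV => simp [eq_empty_of_isEmpty (sinks s), surjStrictCount_zero_of_isEmpty]
    | inr hV =>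
      have hpow : ∀ U : Finset V,
          (-1 : ℤ) ^ (Fintype.card V - #U) = (-1) ^ Fintype.card V * (-1) ^ #U := fun U => by
        conv_rhs => rw [← Nat.sub_add_cancel (card_le_univ U)]
        rw [pow_add, mul_assoc, ← mul_pow, neg_one_mul, neg_neg, one_pow, mul_one]
      rw [surjStrictCount_zero_of_nonempty, Nat.cast_zero, add_zero, sum_neg_distrib]
      simp only [hpow, ← mul_sum]
      rw [sum_erase_eq_sub (empty_mem_powerset _),
        sum_powerset_neg_one_pow_card_of_nonempty (sinks_nonempty h)]
      simp

def strictColoringPoly (s t : A → V) : ℚ[X] :=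
  ∑ k ∈ range (Fintype.card V + 1), (surjStrictCount s t k : ℚ[X]) * Ring.choose X k

theorem strictColoringPoly_eval_natCast (q : ℕ) :
    (strictColoringPoly s t).eval (q : ℚ) = #(strictColorings s t q) := by
  simp [strictColoringPoly, eval_finsetSum, eval_ringChoose_X, Ring.choose_natCast,
    card_strictColorings, mul_comm]

theorem strictColoringPoly_eval_neg_one :
    (strictColoringPoly s t).eval (-1) =
      ∑ k ∈ range (Fintype.card V + 1), (-1 : ℚ) ^ k * surjStrictCount s t k := by
  simp [strictColoringPoly, eval_finsetSum, eval_ringChoose_X, Ring.choose_neg_one, mul_comm]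

theorem strictColoringPoly_eval_neg_one_of_not_hasDicycle (h : ¬ HasDicycle s t) :
    (strictColoringPoly s t).eval (-1) = (-1) ^ Fintype.card V := by
  rw [strictColoringPoly_eval_neg_one]
  exact_mod_cast sum_neg_one_pow_mul_surjStrictCount h le_rfl

theorem strictColoringPoly_eq_zero_of_hasDicycle (h : HasDicycle s t) :
    strictColoringPoly s t = 0 := by
  simp [strictColoringPoly, surjStrictCount, strictColorings_eq_empty h]

/-- `g a = 0, 1, 2` puts the arc `a` into `R` (deleted), `S` (kept) or `T` (reversed). -/
def reorientSrc (s t : A → V) (g : A → Fin 3) (a : {a // g a ≠ 0}) : V :=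
  if g a.1 = 2 then t a.1 else s a.1

def reorientTgt (s t : A → V) (g : A → Fin 3) (a : {a // g a ≠ 0}) : V :=
  if g a.1 = 2 then s a.1 else t a.1

theorem forall_iff_mem_strictColorings {q : ℕ} (f : V → Fin q) (g : A → Fin 3) :
    (∀ a, (![True, f (s a) < f (t a), f (t a) < f (s a)] : Fin 3 → Prop) (g a)) ↔
      f ∈ strictColorings (reorientSrc s t g) (reorientTgt s t g) q := by
  simp only [strictColorings, mem_filter, mem_univ, true_and, reorientSrc, reorientTgt,
    Subtype.forall]
  refine forall_congr' fun a => ?_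
  obtain h | h | h : g a = 0 ∨ g a = 1 ∨ g a = 2 := by omega
  all_goals simp [h]

theorem colorSum_one_add [Fintype A] [DecidableEq A] (q : ℕ) (y z : ℚ) :
    colorSum V A s t q (1 + y) (1 + z) = ∑ g : A → Fin 3,
      y ^ #{a | g a = 1} * z ^ #{a | g a = 2} *
        #(strictColorings (reorientSrc s t g) (reorientTgt s t g) q) := by
  rw [colorSum, sum_congr rfl fun f _ => one_add_pow_mul_one_add_pow y z
    (fun a => f (s a) < f (t a)) (fun a => f (t a) < f (s a)) fun a => lt_asymm, sum_comm]
  refine sum_congr rfl fun g _ => ?_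
  simp only [Fintype.prod_ite_zero, forall_iff_mem_strictColorings, sum_ite_mem, univ_inter,
    sum_const, nsmul_eq_mul]
  rw [← prod_fiberwise' univ g, Fin.prod_univ_three]
  simp [mul_comm]

end

/-- for a digraph `D = (V,A)`,
`Σ y^{|S|} z^{|T|} = (−1)^{|V|} · B_D(−1, 1+y, 1+z)`, the sum being over all ordered
partitions `A = R ⊎ S ⊎ T` (encoded by `g : A → Fin 3`, `R = g⁻¹(0)`, `S = g⁻¹(1)`,
`T = g⁻¹(2)`) such that the digraph obtained from `D` by deleting the arcs of `R` and
reversing the arcs of `T` is acyclic. -/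
theorem B_at_minus_one_counts_acyclic_deletions_reorientations
    (V A : Type) [Fintype V] [DecidableEq V] [Fintype A] [DecidableEq A]
    (s t : A → V)
    (B : MvPolynomial (Fin 3) ℚ)
    (hB : ∀ q : ℕ, 0 < q → ∀ y z : ℚ,
      MvPolynomial.eval ![(q : ℚ), y, z] B = colorSum V A s t q y z) :
    ∀ y z : ℚ,
      ∑ g ∈ (Finset.univ : Finset (A → Fin 3)).filter
          (fun g => ¬ HasDicycle
            (fun b : {a : A // g a ≠ 0} => if g b.1 = 2 then t b.1 else s b.1)
            (fun b : {a : A // g a ≠ 0} => if g b.1 = 2 then s b.1 else t b.1)),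
        y ^ (Finset.univ.filter (fun a => g a = 1)).card *
        z ^ (Finset.univ.filter (fun a => g a = 2)).card
      = (-1 : ℚ) ^ (Fintype.card V) *
        MvPolynomial.eval ![(-1 : ℚ), 1 + y, 1 + z] B := by
  intro y z
  change ∑ g ∈ univ.filter fun g => ¬ HasDicycle (reorientSrc s t g) (reorientTgt s t g), _ = _
  set P : ℚ[X] := ∑ g : A → Fin 3, C (y ^ #{a | g a = 1} * z ^ #{a | g a = 2}) *
    strictColoringPoly (reorientSrc s t g) (reorientTgt s t g)
  have hP : ∀ x, MvPolynomial.eval ![x, 1 + y, 1 + z] B = P.eval x :=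
    MvPolynomial.eval_vecCons_eq_of_forall_natCast fun q hq => by
      simp [P, hB q hq, colorSum_one_add, eval_finsetSum, strictColoringPoly_eval_natCast]
  rw [hP, eval_finsetSum, sum_filter, mul_sum]
  refine sum_congr rfl fun g _ => ?_
  by_cases hg : HasDicycle (reorientSrc s t g) (reorientTgt s t g)
  · rw [if_neg (not_not.2 hg), strictColoringPoly_eq_zero_of_hasDicycle hg, mul_zero, eval_zero,
      mul_zero]
  · rw [if_pos hg, eval_mul, eval_C, strictColoringPoly_eval_neg_one_of_not_hasDicycle hg,
      mul_left_comm, ← pow_add, ← two_mul, pow_mul, neg_one_sq, one_pow, mul_one]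
end

section
/- Let D = (V,A) be a digraph. Then, as an identity in the field of rational functions in y, Σ_{S ⊆ A : D^{−S} totally cyclic} y^{|S|} = (−1)^{comp(D)} · (1+y)^{|A|} · B_D(−1, y/(1+y), 1/(1+y)), where D^{−S} is the digraph obtained from D by swapping the source and target of each arc in S, and B_D(−1, y/(1+y), 1/(1+y)) is the evaluation of the B-polynomial of D at q = −1 and at the indicated rational functions of y. -/
/-!
Substituting `y / (1 + y)` and `1 / (1 + y)` and multiplying by `(1 + y) ^ |A|` weights each arc
by `y`, `1` or `1 + y` according as it ascends, descends or is flat. Expanding the product, the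
`q`-th value becomes `∑_S y ^ |S| Ω_S(q)`, where `Ω_S(q)` counts the colorings that weakly
decrease along every arc of `D^{-S}`: the order polynomial of the reachability preorder of
`D^{-S}`. So the identity holds between polynomials in `q` and may be evaluated at `q = -1`.
Writing the order polynomial in the binomial basis, its value at `-1` is the alternating count of
ordered partitions into lower sets; by a recursion over lower subsets this equals
`(-1) ^ (number of classes)` when the preorder is an equivalence and `0` otherwise. The
reachability preorder of `D^{-S}` is an equivalence exactly when `D^{-S}` is totally cyclic, and
its classes are then the connected components of `D`.
-/

open Finset

/-- The setoid on vertices whose classes are the connected components of the graph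
underlying the digraph (arc directions forgotten). -/
def connSetoid {V A : Type} (s t : A → V) : Setoid V where
  r := Relation.ReflTransGen (fun x y => ∃ a, (s a = x ∧ t a = y) ∨ (s a = y ∧ t a = x))
  iseqv := by
    refine ⟨fun _ => Relation.ReflTransGen.refl, ?_, fun h h' => h.trans h'⟩
    intro x y h
    induction h with
    | refl => exact Relation.ReflTransGen.refl
    | tail _ hbc ih => exact Relation.ReflTransGen.head (hbc.imp (fun a ha => ha.symm)) ih

open scoped Classical

section LowerSubsets

variable {V : Type} {r : V → V → Prop}

variable (r) in
noncomputable def lowerSubsets (W : Finset V) : Finset (Finset V) :=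
  {D ∈ W.powerset | ∀ y ∈ D, ∀ x ∈ W, r x y → x ∈ D}

lemma mem_lowerSubsets {W D : Finset V} :
    D ∈ lowerSubsets r W ↔ D ⊆ W ∧ ∀ y ∈ D, ∀ x ∈ W, r x y → x ∈ D := by
  rw [lowerSubsets, mem_filter, mem_powerset]

lemma self_mem_lowerSubsets (W : Finset V) : W ∈ lowerSubsets r W :=
  mem_lowerSubsets.2 ⟨subset_rfl, fun _ _ _ hx _ => hx⟩

lemma eq_of_sum_lowerSubsets_eq_zero {a b : Finset V → ℤ} (h0 : a ∅ = b ∅)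
    (ha : ∀ W : Finset V, W.Nonempty → ∑ D ∈ lowerSubsets r W, a D = 0)
    (hb : ∀ W : Finset V, W.Nonempty → ∑ D ∈ lowerSubsets r W, b D = 0) (W : Finset V) :
    a W = b W := by
  induction W using strongInduction with
  | H W ih =>
    obtain rfl | hW := W.eq_empty_or_nonempty
    · exact h0
    have hrest : ∑ D ∈ (lowerSubsets r W).erase W, a D =
        ∑ D ∈ (lowerSubsets r W).erase W, b D :=
      sum_congr rfl fun D hD => ih D <| ssubset_of_subset_of_ne
        (mem_lowerSubsets.1 (mem_erase.1 hD).2).1 (mem_erase.1 hD).1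
    have ha' := ha W hW
    have hb' := hb W hW
    rw [← add_sum_erase _ _ (self_mem_lowerSubsets W)] at ha' hb'
    linarith

variable (r) in
noncomputable def minimals (W : Finset V) : Finset V :=
  {x ∈ W | ∀ y ∈ W, r y x → r x y}

lemma mem_minimals {W : Finset V} {x : V} :
    x ∈ minimals r W ↔ x ∈ W ∧ ∀ y ∈ W, r y x → r x y :=
  mem_filter

lemma minimals_nonempty [IsPreorder V r] {W : Finset V} (hW : W.Nonempty) :
    (minimals r W).Nonempty := by
  let _ : Preorder V := { le := r, le_refl := refl_of r, le_trans := fun _ _ _ => trans_of r }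
  obtain ⟨x, hx, hmin⟩ := W.exists_minimal hW
  exact ⟨x, mem_minimals.2 ⟨hx, fun y hy hyx => hmin hy hyx⟩⟩

end LowerSubsets

section MonotoneSurjections

variable {V : Type} [Fintype V] [DecidableEq V] {r : V → V → Prop}

variable (r) in
/-- The `r`-monotone maps from `W` onto `{0, …, k - 1}`, extended by `0` outside `W`. -/
noncomputable def monotoneSurjections (W : Finset V) (k : ℕ) : Finset (V → ℕ) :=
  {f ∈ Fintype.piFinset fun x => if x ∈ W then range k else {0} |
    (∀ j < k, ∃ x ∈ W, f x = j) ∧ ∀ x ∈ W, ∀ y ∈ W, r x y → f x ≤ f y}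

lemma mem_monotoneSurjections {W : Finset V} {k : ℕ} {f : V → ℕ} :
    f ∈ monotoneSurjections r W k ↔ (∀ x ∉ W, f x = 0) ∧ (∀ x ∈ W, f x < k) ∧
      (∀ j < k, ∃ x ∈ W, f x = j) ∧ ∀ x ∈ W, ∀ y ∈ W, r x y → f x ≤ f y := by
  have hvalues : (∀ x, f x ∈ if x ∈ W then range k else {0}) ↔
      (∀ x ∉ W, f x = 0) ∧ ∀ x ∈ W, f x < k := by
    refine ⟨fun h => ⟨fun x hx => ?_, fun x hx => ?_⟩, fun h x => ?_⟩
    · simpa [hx] using h x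
    · simpa [hx] using h x
    · split_ifs with hx
      · exact mem_range.2 (h.2 x hx)
      · exact mem_singleton.2 (h.1 x hx)
  rw [monotoneSurjections, mem_filter, Fintype.mem_piFinset, hvalues, and_assoc]

lemma monotoneSurjections_eq_empty_of_card_lt {W : Finset V} {k : ℕ} (h : #W < k) :
    monotoneSurjections r W k = ∅ := by
  refine eq_empty_of_forall_notMem fun f hf => ?_
  obtain ⟨-, -, hsurj, -⟩ := mem_monotoneSurjections.1 hf
  have : range k ⊆ W.image f := fun j hj =>
    let ⟨x, hx, hfx⟩ := hsurj j (mem_range.1 hj)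
    mem_image.2 ⟨x, hx, hfx⟩
  have := (card_le_card this).trans card_image_le
  rw [card_range] at this
  omega

lemma monotoneSurjections_zero_of_nonempty {W : Finset V} (hW : W.Nonempty) :
    monotoneSurjections r W 0 = ∅ := by
  refine eq_empty_of_forall_notMem fun f hf => ?_
  obtain ⟨x, hx⟩ := hW
  exact Nat.not_lt_zero _ ((mem_monotoneSurjections.1 hf).2.1 x hx)

lemma monotoneSurjections_empty_zero : monotoneSurjections r (∅ : Finset V) 0 = {0} := by
  ext f
  simp [mem_monotoneSurjections, funext_iff]

lemma lowerLevels_mem_erase_lowerSubsets {W : Finset V} {k : ℕ} {f : V → ℕ}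
    (hf : f ∈ monotoneSurjections r W (k + 1)) :
    {x ∈ W | f x < k} ∈ (lowerSubsets r W).erase W := by
  obtain ⟨-, -, hsurj, hmono⟩ := mem_monotoneSurjections.1 hf
  refine mem_erase.2 ⟨fun h => ?_, mem_lowerSubsets.2 ⟨filter_subset _ _, ?_⟩⟩
  · obtain ⟨x, hx, hfx⟩ := hsurj k k.lt_succ_self
    have := (mem_filter.1 (h.symm ▸ hx : x ∈ {x ∈ W | f x < k})).2
    omega
  · intro y hy x hx hxy
    have hy' := mem_filter.1 hy
    exact mem_filter.2 ⟨hx, (hmono x hx y hy'.1 hxy).trans_lt hy'.2⟩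

lemma restrict_mem_monotoneSurjections {W : Finset V} {k : ℕ} {f : V → ℕ}
    (hf : f ∈ monotoneSurjections r W (k + 1)) :
    (fun x => if x ∈ {x ∈ W | f x < k} then f x else 0) ∈
      monotoneSurjections r {x ∈ W | f x < k} k := by
  obtain ⟨-, -, hsurj, hmono⟩ := mem_monotoneSurjections.1 hf
  refine mem_monotoneSurjections.2 ⟨fun x hx => if_neg hx, fun x hx => ?_, fun j hj => ?_,
    fun x hx y hy hxy => ?_⟩
  · simpa only [if_pos hx] using (mem_filter.1 hx).2
  · obtain ⟨x, hx, rfl⟩ := hsurj j (by omega)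
    have hxD : x ∈ {x ∈ W | f x < k} := mem_filter.2 ⟨hx, hj⟩
    exact ⟨x, hxD, if_pos hxD⟩
  · simpa only [if_pos hx, if_pos hy] using
      hmono x (mem_filter.1 hx).1 y (mem_filter.1 hy).1 hxy

lemma extend_mem_monotoneSurjections {W D : Finset V} {k : ℕ} {g : V → ℕ}
    (hD : D ∈ (lowerSubsets r W).erase W) (hg : g ∈ monotoneSurjections r D k) :
    (fun x => if x ∈ W \ D then k else g x) ∈ monotoneSurjections r W (k + 1) ∧
      {x ∈ W | (if x ∈ W \ D then k else g x) < k} = D := by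
  obtain ⟨hDne, hDW, hlower⟩ : D ≠ W ∧ D ⊆ W ∧ _ := by
    rw [mem_erase, mem_lowerSubsets] at hD
    exact ⟨hD.1, hD.2⟩
  obtain ⟨h0, hlt, hsurj, hmono⟩ := mem_monotoneSurjections.1 hg
  have hle : ∀ x ∈ W, (if x ∈ W \ D then k else g x) ≤ k := fun x hx => by
    split_ifs with h
    · rfl
    · exact (hlt x (by simp_all)).le
  refine ⟨mem_monotoneSurjections.2 ⟨fun x hx => ?_, fun x hx => (hle x hx).trans_lt
    k.lt_succ_self, fun j hj => ?_, fun x hx y hy hxy => ?_⟩, ?_⟩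
  · simp [hx, h0 x fun h => hx (hDW h)]
  · rcases Nat.lt_succ_iff_lt_or_eq.1 hj with hj | rfl
    · obtain ⟨x, hx, rfl⟩ := hsurj j hj
      exact ⟨x, hDW hx, by simp [hx]⟩
    · obtain ⟨x, hxW, hxD⟩ := exists_of_ssubset (ssubset_of_subset_of_ne hDW hDne)
      exact ⟨x, hxW, by simp [hxW, hxD]⟩
  · by_cases hyD : y ∈ D
    · have hxD := hlower y hyD x hx hxy
      simpa [hxD, hyD] using hmono x hxD y hyD hxy
    · simpa [hy, hyD] using hle x hx
  · ext x
    by_cases hxD : x ∈ D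
    · simp [hxD, hDW hxD, hlt x hxD]
    · simp +contextual [hxD]

/-- The points below the top level `k` of a surjection onto `{0, …, k}` form a proper lower
subset, and the surjections with a given such subset `D` correspond to the surjections of `D`
onto `{0, …, k - 1}`. -/
lemma card_monotoneSurjections_succ (W : Finset V) (k : ℕ) :
    #(monotoneSurjections r W (k + 1)) =
      ∑ D ∈ (lowerSubsets r W).erase W, #(monotoneSurjections r D k) := by
  rw [card_eq_sum_card_fiberwise fun _ => lowerLevels_mem_erase_lowerSubsets]
  refine sum_congr rfl fun D hD => card_nbij' (fun f x => if x ∈ D then f x else 0)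
    (fun g x => if x ∈ W \ D then k else g x) ?_ ?_ ?_ ?_
  · intro f hf
    obtain ⟨hmem, rfl⟩ := mem_filter.1 (mem_coe.1 hf)
    exact restrict_mem_monotoneSurjections hmem
  · intro g hg
    obtain ⟨hmem, hlevel⟩ := extend_mem_monotoneSurjections hD (mem_coe.1 hg)
    exact mem_filter.2 ⟨hmem, hlevel⟩
  · intro f hf
    obtain ⟨hmem, rfl⟩ := mem_filter.1 (mem_coe.1 hf)
    obtain ⟨h0, hlt, -, -⟩ := mem_monotoneSurjections.1 hmem
    funext x
    by_cases hxW : x ∈ W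
    · have := hlt x hxW
      by_cases hfx : f x < k
      · simp [hxW, hfx]
      · simp only [mem_sdiff, hxW, mem_filter, hfx, true_and, not_false_eq_true, if_true]
        omega
    · simp [hxW, h0 x hxW]
  · intro g hg
    obtain ⟨h0, -, -, -⟩ := mem_monotoneSurjections.1 (mem_coe.1 hg)
    funext x
    by_cases hxD : x ∈ D
    · simp [hxD]
    · simp [hxD, h0 x hxD]

variable (r) in
noncomputable def signedSurjCount (W : Finset V) : ℤ :=
  ∑ k ∈ range (Fintype.card V + 1), (-1 : ℤ) ^ k * #(monotoneSurjections r W k)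

lemma signedSurjCount_empty : signedSurjCount r (∅ : Finset V) = 1 := by
  rw [signedSurjCount, sum_range_succ', monotoneSurjections_empty_zero]
  have : ∀ k, monotoneSurjections r (∅ : Finset V) (k + 1) = ∅ := fun k =>
    monotoneSurjections_eq_empty_of_card_lt (by simp)
  simp [this]

lemma sum_lowerSubsets_signedSurjCount {W : Finset V} (hW : W.Nonempty) :
    ∑ D ∈ lowerSubsets r W, signedSurjCount r D = 0 := by
  have hsmall : ∀ D ∈ (lowerSubsets r W).erase W, #D < Fintype.card V := fun D hD =>
    have hD' := mem_erase.1 hD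
    (card_lt_card (ssubset_of_subset_of_ne (mem_lowerSubsets.1 hD'.2).1 hD'.1)).trans_le
      (card_le_univ W)
  have hW' : signedSurjCount r W = -∑ D ∈ (lowerSubsets r W).erase W, signedSurjCount r D :=
    calc signedSurjCount r W
        = ∑ k ∈ range (Fintype.card V),
            (-1 : ℤ) ^ (k + 1) * #(monotoneSurjections r W (k + 1)) := by
          simp [signedSurjCount, sum_range_succ' _ (Fintype.card V),
            monotoneSurjections_zero_of_nonempty hW]
      _ = -∑ D ∈ (lowerSubsets r W).erase W,
            ∑ k ∈ range (Fintype.card V), (-1 : ℤ) ^ k * #(monotoneSurjections r D k) := by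
          simp only [card_monotoneSurjections_succ, sum_comm (s := range _), ← sum_neg_distrib,
            Nat.cast_sum, mul_sum, pow_succ]
          simp
      _ = -∑ D ∈ (lowerSubsets r W).erase W, signedSurjCount r D := by
          congr 1
          refine sum_congr rfl fun D hD => ?_
          simp [signedSurjCount, sum_range_succ,
            monotoneSurjections_eq_empty_of_card_lt (hsmall D hD)]
  rw [← add_sum_erase _ _ (self_mem_lowerSubsets W), hW', neg_add_cancel]

end MonotoneSurjections

section ClassSign

variable {V : Type} [Fintype V] {r : V → V → Prop}

variable (r) in
noncomputable def equivClass (x : V) : Finset V :=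
  {y | r x y ∧ r y x}

variable (r) in
noncomputable def classSign [DecidableEq V] (W : Finset V) : ℤ :=
  if ∀ x ∈ W, ∀ y ∈ W, r x y → r y x then (-1) ^ #(W.image (equivClass r)) else 0

lemma equivClass_eq_iff [IsPreorder V r] {x y : V} :
    equivClass r x = equivClass r y ↔ r x y ∧ r y x := by
  refine ⟨fun h => ?_, fun ⟨hxy, hyx⟩ => ?_⟩
  · have : y ∈ equivClass r x := h ▸ mem_filter.2 ⟨mem_univ y, refl_of r y, refl_of r y⟩
    exact (mem_filter.1 this).2
  · ext z
    simp only [equivClass, mem_filter, mem_univ, true_and]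
    exact ⟨fun ⟨h1, h2⟩ => ⟨trans_of r hyx h1, trans_of r h2 hxy⟩,
      fun ⟨h1, h2⟩ => ⟨trans_of r hxy h1, trans_of r h2 hyx⟩⟩

lemma filter_equivClass_mem_lowerSubsets [DecidableEq V] [IsPreorder V r] {W : Finset V}
    {B : Finset (Finset V)} (hB : B ⊆ (minimals r W).image (equivClass r)) :
    {x ∈ W | equivClass r x ∈ B} ∈ lowerSubsets r W ∧
      ∀ x ∈ {x ∈ W | equivClass r x ∈ B}, ∀ y ∈ {x ∈ W | equivClass r x ∈ B},
        r x y → r y x := by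
  have hmin : ∀ x ∈ W, equivClass r x ∈ B → ∀ y ∈ W, r y x → r x y := by
    intro x hx hxB y hy hyx
    obtain ⟨z, hz, hzx⟩ := mem_image.1 (hB hxB)
    obtain ⟨hzx, hxz⟩ := equivClass_eq_iff.1 hzx
    exact trans_of r hxz ((mem_minimals.1 hz).2 y hy (trans_of r hyx hxz))
  simp only [mem_lowerSubsets, mem_filter]
  refine ⟨⟨filter_subset _ _, fun y hy x hx hxy => ⟨hx, ?_⟩⟩, fun x hx y hy hxy => ?_⟩
  · rw [equivClass_eq_iff.2 ⟨hxy, hmin y hy.1 hy.2 x hx hxy⟩]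
    exact hy.2
  · exact hmin y hy.1 hy.2 x hx.1 hxy

/-- The lower subsets of `W` on which `r` is symmetric are the unions of classes of minimal
elements, so the sum is an alternating sum over the subsets of the nonempty set of minimal
classes. -/
lemma sum_lowerSubsets_classSign [DecidableEq V] [IsPreorder V r] {W : Finset V}
    (hW : W.Nonempty) : ∑ D ∈ lowerSubsets r W, classSign r D = 0 := by
  calc ∑ D ∈ lowerSubsets r W, classSign r D
      = ∑ D ∈ lowerSubsets r W with ∀ x ∈ D, ∀ y ∈ D, r x y → r y x,
          (-1) ^ #(D.image (equivClass r)) := by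
        rw [sum_filter]; rfl
    _ = ∑ B ∈ ((minimals r W).image (equivClass r)).powerset, (-1) ^ #B := by
        refine sum_nbij' (fun D => D.image (equivClass r))
          (fun B => {x ∈ W | equivClass r x ∈ B}) ?_
          (fun B hB => mem_filter.2 (filter_equivClass_mem_lowerSubsets (mem_powerset.1 hB)))
          ?_ ?_ fun _ _ => rfl
        · intro D hD
          obtain ⟨⟨hDW, hlower⟩, hsymm⟩ := And.imp_left mem_lowerSubsets.1 (mem_filter.1 hD)
          exact mem_powerset.2 <| image_subset_image fun x hx => mem_minimals.2
            ⟨hDW hx, fun y hy hyx => hsymm y (hlower x hx y hy hyx) x hx hyx⟩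
        · intro D hD
          obtain ⟨hDW, hlower⟩ := mem_lowerSubsets.1 (mem_filter.1 hD).1
          ext x
          simp only [mem_filter, mem_image]
          refine ⟨fun ⟨hx, y, hy, hyx⟩ => ?_, fun hx => ⟨hDW hx, x, hx, rfl⟩⟩
          exact hlower y hy x hx (equivClass_eq_iff.1 hyx.symm).1
        · intro B hB
          ext b
          simp only [mem_image, mem_filter]
          refine ⟨fun ⟨x, hx, hxb⟩ => hxb ▸ hx.2, fun hb => ?_⟩
          obtain ⟨z, hz, rfl⟩ := mem_image.1 (mem_powerset.1 hB hb)
          exact ⟨z, ⟨(mem_minimals.1 hz).1, hb⟩, rfl⟩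
    _ = 0 := sum_powerset_neg_one_pow_card_of_nonempty ((minimals_nonempty hW).image _)

lemma signedSurjCount_eq_classSign [DecidableEq V] [IsPreorder V r] (W : Finset V) :
    signedSurjCount r W = classSign r W :=
  eq_of_sum_lowerSubsets_eq_zero (by simp [signedSurjCount_empty, classSign])
    (fun _ => sum_lowerSubsets_signedSurjCount) (fun _ => sum_lowerSubsets_classSign) W

end ClassSign

section OrderPolynomial

open Polynomial

variable {V : Type} [Fintype V] [DecidableEq V] {r : V → V → Prop}

/-- A monotone map into `Fin q` with image `T` is a monotone surjection onto `Fin #T` followed by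
the increasing enumeration of `T`. -/
lemma card_monotone_eq_sum_card_monotoneSurjections (q : ℕ) :
    #{f : V → Fin q | ∀ x y, r x y → f x ≤ f y} =
      ∑ T : Finset (Fin q), #(monotoneSurjections r univ #T) := by
  rw [card_eq_sum_card_fiberwise (f := fun f => univ.image f) (t := univ) fun _ _ => mem_univ _]
  refine sum_congr rfl fun T _ => ?_
  let e := T.orderIsoOfFin rfl
  have hmemT : ∀ f : V → Fin q, univ.image f = T → ∀ x, f x ∈ T :=
    fun f hf x => hf ▸ mem_image_of_mem f (mem_univ x)
  have hlt : ∀ g ∈ monotoneSurjections r univ #T, ∀ x, g x < #T := fun g hg x =>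
    (mem_monotoneSurjections.1 hg).2.1 x (mem_univ x)
  refine card_bij' (fun f hf x => (e.symm ⟨f x, hmemT f (mem_filter.1 hf).2 x⟩ : ℕ))
    (fun g hg x => e ⟨g x, hlt g hg x⟩) ?_ ?_ ?_ ?_
  · intro f hf
    obtain ⟨hmono, himage⟩ := mem_filter.1 hf
    refine mem_monotoneSurjections.2 ⟨fun x hx => absurd (mem_univ x) hx,
      fun x _ => (e.symm _).is_lt, fun j hj => ?_, fun x _ y _ hxy => ?_⟩
    · have : (e ⟨j, hj⟩ : Fin q) ∈ univ.image f := himage ▸ (e ⟨j, hj⟩).2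
      obtain ⟨x, -, hx⟩ := mem_image.1 this
      refine ⟨x, mem_univ x, ?_⟩
      rw [show (⟨f x, hmemT f (mem_filter.1 hf).2 x⟩ : T) = e ⟨j, hj⟩ from Subtype.ext hx,
        OrderIso.symm_apply_apply]
    · exact e.symm.monotone (Subtype.mk_le_mk.2 ((mem_filter.1 hmono).2 x y hxy))
  · intro g hg
    obtain ⟨-, -, hsurj, hmono⟩ := mem_monotoneSurjections.1 hg
    refine mem_filter.2 ⟨mem_filter.2 ⟨mem_univ _, fun x y hxy => ?_⟩, ?_⟩
    · exact Subtype.mk_le_mk.1 <| e.monotone <| Fin.mk_le_mk.2 <|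
        hmono x (mem_univ x) y (mem_univ y) hxy
    · ext z
      simp only [mem_image, mem_univ, true_and]
      refine ⟨fun ⟨x, hx⟩ => hx ▸ (e _).2, fun hz => ?_⟩
      obtain ⟨x, -, hx⟩ := hsurj _ (e.symm ⟨z, hz⟩).is_lt
      exact ⟨x, by simp only [Fin.eta, hx, OrderIso.apply_symm_apply]⟩
  · intro f hf
    funext x
    simp only [Fin.eta, OrderIso.apply_symm_apply]
  · intro g hg
    funext x
    simp only [Subtype.coe_eta, OrderIso.symm_apply_apply]

variable (r) in
/-- Stanley's order polynomial of the preorder `r`, in the binomial basis `X.choose m`. -/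
noncomputable def orderPolynomial : ℚ[X] :=
  ∑ m ∈ range (Fintype.card V + 1),
    C ((#(monotoneSurjections r univ m) : ℚ) / m.factorial) * descPochhammer ℚ m

lemma orderPolynomial_eval_natCast (q : ℕ) :
    (orderPolynomial r).eval (q : ℚ) = #{f : V → Fin q | ∀ x y, r x y → f x ≤ f y} := by
  set F : ℕ → ℚ := fun m => q.choose m * #(monotoneSurjections r univ m)
  have hvanish : ∀ N ≥ min (q + 1) (Fintype.card V + 1),
      ∑ m ∈ range N, F m = ∑ m ∈ range (min (q + 1) (Fintype.card V + 1)), F m := by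
    refine fun N hN => (sum_subset (range_subset_range.2 hN) fun m _ hm => ?_).symm
    rcases min_le_iff.1 (not_lt.1 (mem_range.2.mt hm)) with hm | hm
    · simp [F, Nat.choose_eq_zero_of_lt (Nat.lt_of_succ_le hm)]
    · simp [F, monotoneSurjections_eq_empty_of_card_lt (W := univ) (r := r)
        ((card_le_univ _).trans_lt (Nat.lt_of_succ_le hm))]
  calc (orderPolynomial r).eval (q : ℚ)
      = ∑ m ∈ range (Fintype.card V + 1), F m := by
        refine (eval_finsetSum _ _ _).trans (sum_congr rfl fun m _ => ?_)
        rw [eval_mul, eval_C, descPochhammer_eval_eq_descFactorial,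
          Nat.descFactorial_eq_factorial_mul_choose]
        have : (m.factorial : ℚ) ≠ 0 := by positivity
        push_cast
        field_simp
        ring
    _ = ∑ m ∈ range (q + 1), F m := by
        rw [hvanish _ (min_le_right _ _), hvanish _ (min_le_left _ _)]
    _ = #{f : V → Fin q | ∀ x y, r x y → f x ≤ f y} := by
        rw [card_monotone_eq_sum_card_monotoneSurjections, ← powerset_univ, Nat.cast_sum,
          sum_powerset_apply_card (fun m => (#(monotoneSurjections r univ m) : ℚ)), card_univ,
          Fintype.card_fin]
        simp [F]

lemma descPochhammer_eval_neg_one (m : ℕ) :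
    (descPochhammer ℚ m).eval (-1) = (-1) ^ m * m.factorial := by
  induction m with
  | zero => simp
  | succ m ih =>
    rw [descPochhammer_succ_right, eval_mul, ih, eval_sub, eval_X, eval_natCast, pow_succ,
      Nat.factorial_succ]
    push_cast
    ring

lemma orderPolynomial_eval_neg_one : (orderPolynomial r).eval (-1) = signedSurjCount r univ := by
  rw [orderPolynomial, signedSurjCount, eval_finsetSum]
  push_cast
  refine sum_congr rfl fun m _ => ?_
  rw [eval_mul, eval_C, descPochhammer_eval_neg_one]
  have : (m.factorial : ℚ) ≠ 0 := by positivity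
  field_simp

end OrderPolynomial

section Digraph

open Relation

variable {V A : Type} {s t : A → V}

variable (s t) in
def Reaches : V → V → Prop :=
  ReflTransGen fun x y => ∃ a, s a = x ∧ t a = y

instance (s t : A → V) : IsPreorder V (Reaches s t) :=
  inferInstanceAs (IsPreorder V (ReflTransGen _))

lemma reaches_swap {x y : V} : Reaches t s x y ↔ Reaches s t y x := by
  have : (Function.swap fun x y => ∃ a, t a = x ∧ s a = y) =
      fun x y => ∃ a, s a = x ∧ t a = y := by
    funext x y
    simp only [Function.swap, and_comm]
  rw [Reaches, Reaches, ← reflTransGen_swap, this]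

lemma reaches_of_arc (a : A) : Reaches s t (s a) (t a) :=
  ReflTransGen.single ⟨a, rfl, rfl⟩

lemma forall_reaches_le_iff {β : Type} [Preorder β] {f : V → β} :
    (∀ x y, Reaches s t x y → f x ≤ f y) ↔ ∀ a, f (s a) ≤ f (t a) := by
  refine ⟨fun h a => h _ _ (reaches_of_arc a), fun h x y hxy => ?_⟩
  induction hxy with
  | refl => exact le_rfl
  | tail _ hstep ih =>
    obtain ⟨a, rfl, rfl⟩ := hstep
    exact ih.trans (h a)

lemma exists_walk_of_reaches {a : A} {y : V} (h : Reaches s t (t a) y) :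
    ∃ (n : ℕ) (c : ℕ → A),
      c 0 = a ∧ (∀ i < n, t (c i) = s (c (i + 1))) ∧ t (c n) = y := by
  induction h with
  | refl => exact ⟨0, fun _ => a, rfl, fun _ h => absurd h (Nat.not_lt_zero _), rfl⟩
  | tail _ hstep ih =>
    obtain ⟨b, rfl, rfl⟩ := hstep
    obtain ⟨n, c, hc0, hc, hcn⟩ := ih
    refine ⟨n + 1, Function.update c (n + 1) b, by simp [hc0], fun i hi => ?_, by simp⟩
    rcases Nat.lt_succ_iff_lt_or_eq.1 hi with hi | rfl
    · simp [Function.update_of_ne (show i ≠ n + 1 by omega),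
        Function.update_of_ne (show i + 1 ≠ n + 1 by omega), hc i hi]
    · simp [hcn]

lemma isCyclicArc_iff_reaches {a : A} : IsCyclicArc s t a ↔ Reaches s t (t a) (s a) := by
  constructor
  · rintro ⟨n, hn, c, hc, i, rfl⟩
    have hpath : ∀ m : ℕ, Reaches s t (s (c (i + 1))) (s (c (i + 1 + m))) := by
      intro m
      induction m with
      | zero => simp only [Nat.cast_zero, add_zero]; exact ReflTransGen.refl
      | succ m ih =>
        have step := reaches_of_arc (s := s) (t := t) (c (i + 1 + m))
        rw [hc] at step
        rw [Nat.cast_succ, ← add_assoc]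
        exact ih.trans step
    -- `n - 1` further steps around the cycle lead from `i + 1` back to `i`
    have hlast := hpath (n - 1)
    rwa [Nat.cast_sub hn, ZMod.natCast_self, Nat.cast_one, zero_sub, add_neg_cancel_right,
      ← hc] at hlast
  · intro h
    obtain ⟨n, c, hc0, hc, hcn⟩ := exists_walk_of_reaches h
    refine ⟨n + 1, n.succ_pos, fun i => c i.val, ?_, 0, hc0⟩
    change ∀ i : Fin (n + 1), t (c i) = s (c ((i + 1 : Fin (n + 1)) : ℕ))
    intro i
    rw [Fin.val_add_one]
    split_ifs with hi
    · rw [hi, Fin.val_last, hcn, hc0]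
    · exact hc i (lt_of_le_of_ne (Nat.lt_succ_iff.1 i.is_lt) (fun h => hi (Fin.ext h)))

lemma isCyclicArc_swap {a : A} : IsCyclicArc t s a ↔ IsCyclicArc s t a := by
  rw [isCyclicArc_iff_reaches, isCyclicArc_iff_reaches, reaches_swap]

lemma forall_isCyclicArc_iff_symmetric :
    (∀ a, IsCyclicArc s t a) ↔ ∀ x y, Reaches s t x y → Reaches s t y x := by
  simp only [isCyclicArc_iff_reaches]
  refine ⟨fun h x y hxy => ?_, fun h a => h _ _ (reaches_of_arc a)⟩
  induction hxy with
  | refl => exact ReflTransGen.refl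
  | tail _ hstep ih =>
    obtain ⟨a, rfl, rfl⟩ := hstep
    exact (h a).trans ih

lemma connSetoid_iff_reaches (h : ∀ x y, Reaches s t x y → Reaches s t y x) {x y : V} :
    connSetoid s t x y ↔ Reaches s t x y := by
  refine ⟨fun hxy => ?_, ReflTransGen.mono (fun _ _ ⟨a, hxy⟩ => ⟨a, Or.inl hxy⟩) x y⟩
  induction hxy with
  | refl => exact ReflTransGen.refl
  | tail _ hstep ih =>
    obtain ⟨a, ⟨rfl, rfl⟩ | ⟨rfl, rfl⟩⟩ := hstep
    · exact ih.trans (reaches_of_arc a)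
    · exact ih.trans (h _ _ (reaches_of_arc a))

lemma connSetoid_eq_of_forall_or {s' t' : A → V}
    (h : ∀ a, s' a = s a ∧ t' a = t a ∨ s' a = t a ∧ t' a = s a) :
    connSetoid s' t' = connSetoid s t := by
  have hadj : (fun x y => ∃ a, (s' a = x ∧ t' a = y) ∨ (s' a = y ∧ t' a = x)) =
      fun x y => ∃ a, (s a = x ∧ t a = y) ∨ (s a = y ∧ t a = x) := by
    funext x y
    refine propext (exists_congr fun a => ?_)
    rcases h a with ⟨h1, h2⟩ | ⟨h1, h2⟩ <;> rw [h1, h2]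
    exact or_comm.trans (or_congr and_comm and_comm)
  exact Setoid.ext fun x y => by
    change ReflTransGen _ x y ↔ ReflTransGen _ x y
    rw [hadj]

lemma natCard_quotient_eq_card_image [Fintype V] [DecidableEq V] (c : Setoid V) :
    Nat.card (Quotient c) = #(univ.image fun x => univ.filter (c x)) := by
  have hclass : ∀ x y, c x y → univ.filter (c x) = univ.filter (c y) := fun x y hxy => by
    ext z
    simp only [mem_filter, mem_univ, true_and]
    exact ⟨c.trans (c.symm hxy), c.trans hxy⟩
  let G : Quotient c → Finset V := Quotient.lift _ fun x y h => hclass x y h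
  have hG : Function.Injective G := by
    rintro ⟨x⟩ ⟨y⟩ hxy
    have : y ∈ G ⟦x⟧ := hxy ▸ mem_filter.2 ⟨mem_univ y, c.refl y⟩
    exact Quotient.sound (mem_filter.1 this).2
  rw [Nat.card_eq_fintype_card, ← card_univ, ← card_image_of_injective univ hG,
    ← image_univ_of_surjective (Quotient.mk_surjective (s := c)), image_image]
  rfl

lemma classSign_reaches [Fintype V] [DecidableEq V] :
    classSign (Reaches s t) univ =
      if ∀ a, IsCyclicArc s t a then (-1) ^ Nat.card (Quotient (connSetoid s t)) else 0 := by
  rw [classSign, forall_isCyclicArc_iff_symmetric]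
  by_cases h : ∀ x y, Reaches s t x y → Reaches s t y x
  · rw [if_pos fun x _ y _ => h x y, if_pos h, natCard_quotient_eq_card_image]
    congr 3
    funext x
    exact filter_congr fun y _ => (and_iff_left_of_imp (h x y)).trans
      (connSetoid_iff_reaches h).symm
  · rw [if_neg h, if_neg fun h' => h fun x y => h' x (mem_univ x) y (mem_univ y)]

end Digraph

section Polynomials

open Polynomial

lemma Polynomial.eq_of_eval_pos_natCast_eq {R : Type*} [CommRing R] [IsDomain R] [CharZero R]
    {p q : R[X]} (h : ∀ n : ℕ, 0 < n → p.eval (n : R) = q.eval (n : R)) : p = q :=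
  eq_of_infinite_eval_eq p q <| Set.infinite_of_injective_forall_mem
    (f := fun n : ℕ => ((n + 1 : ℕ) : R)) (fun _ _ hab => by simpa using hab)
    fun n => h (n + 1) n.succ_pos

lemma MvPolynomial.eval_aeval_polynomial {R σ : Type*} [CommSemiring R] (B : MvPolynomial σ R)
    (f : σ → R[X]) (x : R) :
    (MvPolynomial.aeval f B).eval x = MvPolynomial.eval (fun i => (f i).eval x) B := by
  rw [← Polynomial.coe_aeval_eq_eval, ← AlgHom.comp_apply, MvPolynomial.comp_aeval]
  simp

end Polynomials

section Reorientation

variable {V A : Type} [Fintype A] [DecidableEq A] {s t : A → V}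

/-- The source map of the reorientation `D^{-S}`; its target map is `reorient t s S`. -/
def reorient (s t : A → V) (S : Finset A) : A → V :=
  fun b => if b ∈ S then t b else s b

lemma forall_reorient_le_iff {β : Type} [LinearOrder β] {f : V → β} {S : Finset A} :
    (∀ a, f (reorient t s S a) ≤ f (reorient s t S a)) ↔
      (∀ a ∈ univ \ S, f (t a) ≤ f (s a)) ∧ ∀ a ∈ S, f (s a) ≤ f (t a) := by
  refine ⟨fun h => ⟨fun a ha => ?_, fun a ha => ?_⟩, fun ⟨h2, h1⟩ a => ?_⟩
  · simpa [reorient, (mem_sdiff.1 ha).2] using h a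
  · simpa [reorient, ha] using h a
  · by_cases ha : a ∈ S
    · simpa [reorient, ha] using h1 a ha
    · simpa [reorient, ha] using h2 a (mem_sdiff.2 ⟨mem_univ a, ha⟩)

lemma one_add_mul_arcWeight {β : Type} [LinearOrder β] {y : ℚ} (hy : 1 + y ≠ 0) (i j : β) :
    (1 + y) * ((if i < j then y / (1 + y) else 1) * (if j < i then 1 / (1 + y) else 1)) =
      (if i ≤ j then y else 0) + (if j ≤ i then 1 else 0) := by
  rcases lt_trichotomy i j with h | rfl | h
  · simp [h, h.not_gt, h.le, h.not_ge]
    field_simp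
  · simp
    ring
  · simp [h, h.not_gt, h.le, h.not_ge]
    field_simp

variable [Fintype V] [DecidableEq V]

/-- Each arc contributes `y`, `1` or `1 + y` according as it is an ascent, a descent or flat;
expanding the product over arcs chooses, for each arc, whether to reverse it. -/
lemma colorSum_eq_sum_reorient {y : ℚ} (hy : 1 + y ≠ 0) (q : ℕ) :
    (1 + y) ^ Fintype.card A * colorSum V A s t q (y / (1 + y)) (1 / (1 + y)) =
      ∑ S : Finset A,
        y ^ #S * #{f : V → Fin q | ∀ a, f (reorient t s S a) ≤ f (reorient s t S a)} := by
  have hterm : ∀ f : V → Fin q,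
      (1 + y) ^ Fintype.card A * ((y / (1 + y)) ^ #{a | f (s a) < f (t a)} *
        (1 / (1 + y)) ^ #{a | f (t a) < f (s a)}) =
      ∑ S : Finset A,
        if ∀ a, f (reorient t s S a) ≤ f (reorient s t S a) then y ^ #S else 0 := by
    intro f
    calc _ = ∏ a, (1 + y) * ((if f (s a) < f (t a) then y / (1 + y) else 1) *
              (if f (t a) < f (s a) then 1 / (1 + y) else 1)) := by
          rw [prod_mul_distrib, prod_mul_distrib, prod_const, card_univ, ← prod_filter,
            ← prod_filter, prod_const, prod_const]
      _ = ∏ a, ((if f (s a) ≤ f (t a) then y else 0) +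
            (if f (t a) ≤ f (s a) then 1 else 0)) :=
          prod_congr rfl fun a _ => one_add_mul_arcWeight hy _ _
      _ = ∑ S : Finset A, (∏ a ∈ S, if f (s a) ≤ f (t a) then y else 0) *
            ∏ a ∈ univ \ S, if f (t a) ≤ f (s a) then (1 : ℚ) else 0 := by
          rw [prod_add, powerset_univ]
      _ = _ := by
          refine sum_congr rfl fun S _ => ?_
          rw [prod_ite_zero, prod_ite_zero, prod_const, prod_const_one, mul_boole, ← ite_and]
          simp only [← forall_reorient_le_iff]
  rw [colorSum, mul_sum, sum_congr rfl fun f _ => hterm f, sum_comm]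
  refine sum_congr rfl fun S _ => ?_
  rw [← sum_filter, sum_const, nsmul_eq_mul, mul_comm]

lemma classSign_reaches_reorient (S : Finset A) :
    classSign (Reaches (reorient t s S) (reorient s t S)) univ =
      if ∀ a, IsCyclicArc (reorient s t S) (reorient t s S) a then
        (-1) ^ Nat.card (Quotient (connSetoid s t)) else 0 := by
  have hsame : connSetoid (reorient t s S) (reorient s t S) = connSetoid s t :=
    connSetoid_eq_of_forall_or fun a => by by_cases ha : a ∈ S <;> simp [reorient, ha]
  simp only [classSign_reaches, hsame, isCyclicArc_swap]

open Polynomial in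
lemma C_mul_eq_sum_orderPolynomial_reorient {y : ℚ} (hy : 1 + y ≠ 0) {Q : ℚ[X]}
    (hQ : ∀ q : ℕ, 0 < q →
      Q.eval (q : ℚ) = colorSum V A s t q (y / (1 + y)) (1 / (1 + y))) :
    C ((1 + y) ^ Fintype.card A) * Q =
      ∑ S : Finset A,
        C (y ^ #S) * orderPolynomial (Reaches (reorient t s S) (reorient s t S)) := by
  refine eq_of_eval_pos_natCast_eq fun q hq => ?_
  simp only [eval_mul, eval_C, eval_finsetSum, orderPolynomial_eval_natCast, forall_reaches_le_iff]
  rw [hQ q hq, colorSum_eq_sum_reorient hy]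

end Reorientation

open Polynomial in
/-- for a digraph `D = (V,A)`, as an identity of rational functions
in `y` (stated for every `y ≠ −1`):
`Σ_{S ⊆ A : D^{−S} totally cyclic} y^{|S|}
  = (−1)^{comp(D)} (1+y)^{|A|} B_D(−1, y/(1+y), 1/(1+y))`,
where `D^{−S}` reverses the arcs of `S` and `comp(D)` is the number of connected
components of the underlying graph. -/
theorem B_at_minus_one_counts_totally_cyclic_reorientations
    (V A : Type) [Fintype V] [DecidableEq V] [Fintype A] [DecidableEq A]
    (s t : A → V)
    (B : MvPolynomial (Fin 3) ℚ)
    (hB : ∀ q : ℕ, 0 < q → ∀ y z : ℚ,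
      MvPolynomial.eval ![(q : ℚ), y, z] B = colorSum V A s t q y z) :
    ∀ y : ℚ, y ≠ -1 →
      ∑ S ∈ (Finset.univ : Finset (Finset A)).filter
          (fun S => ∀ a : A, IsCyclicArc
            (fun b => if b ∈ S then t b else s b)
            (fun b => if b ∈ S then s b else t b) a),
        y ^ S.card
      = (-1 : ℚ) ^ (Nat.card (Quotient (connSetoid s t))) *
        ((1 + y) ^ (Fintype.card A) *
          MvPolynomial.eval ![(-1 : ℚ), y / (1 + y), 1 / (1 + y)] B) := by
  intro y hy
  have hy1 : 1 + y ≠ 0 := fun h => hy (by linarith)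
  set Q : ℚ[X] := MvPolynomial.aeval ![X, C (y / (1 + y)), C (1 / (1 + y))] B
  have hQ : ∀ x, Q.eval x = MvPolynomial.eval ![x, y / (1 + y), 1 / (1 + y)] B := fun x => by
    rw [MvPolynomial.eval_aeval_polynomial]
    congr 2
    funext i
    fin_cases i <;> simp
  have hminus := congrArg (eval (-1)) <|
    C_mul_eq_sum_orderPolynomial_reorient hy1 fun q hq => (hQ q).trans (hB q hq _ _)
  simp only [eval_mul, eval_C, hQ, eval_finsetSum, orderPolynomial_eval_neg_one,
    signedSurjCount_eq_classSign, classSign_reaches_reorient] at hminus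
  unfold reorient at hminus
  rw [hminus, mul_sum, sum_filter]
  refine sum_congr rfl fun S _ => ?_
  split_ifs
  · push_cast
    rw [mul_left_comm, ← mul_assoc, mul_assoc, ← mul_pow]
    norm_num
  · simp
end
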